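/- arXiv:2512.09733 — 9 statements merged into one kernel-verified Lean document; each statement's English description precedes it below -/
import Mathlib

section
/- Suppose f : ℝ → ℝ is continuous, one-sided Lipschitz and locally Lipschitz with polynomial growth of the local Lipschitz constant, let φ be its flow, and define ψ_s(z) = (φ_s(z) − z)/s for s > 0 and ψ_0 = f. Then there exists a constant C ∈ (0,∞) such that for all s ∈ [0,1] and all z₁, z₂ ∈ ℝ one has (z₂ − z₁)(ψ_s(z₂) − ψ_s(z₁)) ≤ C (z₂ − z₁)². -/
/-!
The one-sided Lipschitz condition makes `t ↦ exp (-2 L t) * (φ t z₂ - φ t z₁) ^ 2` antitone, so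
`|φ s z₂ - φ s z₁| ≤ exp (L s) * |z₂ - z₁|`. Hence
`(z₂ - z₁) * (ψ s z₂ - ψ s z₁) = (z₂ - z₁) * ((φ s z₂ - φ s z₁) - (z₂ - z₁)) / s` is at most
`(exp (L s) - 1) / s * (z₂ - z₁) ^ 2`, and `exp x - 1 ≤ x * exp x` bounds this quotient by
`|L| * exp |L|` uniformly in `s ∈ (0, 1]`.
-/

open Real Set

theorem Real.exp_sub_one_le_mul_exp (x : ℝ) : exp x - 1 ≤ x * exp x := by
  have h := mul_le_mul_of_nonneg_left (one_sub_le_exp_neg x) (exp_pos x).le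
  rw [← exp_add, add_neg_cancel, exp_zero] at h
  linarith

section OneSidedLipschitz

variable {f : ℝ → ℝ} {L : ℝ} {x y : ℝ → ℝ}

theorem antitoneOn_exp_mul_sq_sub_of_oneSidedLipschitz
    (hosl : ∀ a b : ℝ, (b - a) * (f b - f a) ≤ L * (b - a) ^ 2)
    (hx : ∀ t, 0 ≤ t → HasDerivWithinAt x (f (x t)) (Ici 0) t)
    (hy : ∀ t, 0 ≤ t → HasDerivWithinAt y (f (y t)) (Ici 0) t) :
    AntitoneOn (fun t => exp (-(2 * L) * t) * (y t - x t) ^ 2) (Ici 0) := by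
  have hderiv : ∀ t, 0 ≤ t → HasDerivWithinAt (fun t => exp (-(2 * L) * t) * (y t - x t) ^ 2)
      (exp (-(2 * L) * t) * (2 * ((y t - x t) * (f (y t) - f (x t)) - L * (y t - x t) ^ 2)))
      (Ici 0) t := by
    intro t ht
    have hexp := ((hasDerivAt_id' t).const_mul (-(2 * L))).exp.hasDerivWithinAt (s := Ici 0)
    refine (hexp.mul (((hy t ht).fun_sub (hx t ht)).fun_pow 2)).congr_deriv ?_
    push_cast
    ring
  refine antitoneOn_of_hasDerivWithinAt_nonpos (convex_Ici 0)
    (f' := fun t =>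
      exp (-(2 * L) * t) * (2 * ((y t - x t) * (f (y t) - f (x t)) - L * (y t - x t) ^ 2)))
    (fun t ht => (hderiv t ht).continuousWithinAt) (fun t ht => ?_) (fun t _ => ?_)
  · rw [interior_Ici] at ht ⊢
    exact (hderiv t ht.le).mono Ioi_subset_Ici_self
  · exact mul_nonpos_of_nonneg_of_nonpos (exp_pos _).le (by linarith [hosl (x t) (y t)])

theorem abs_sub_le_exp_mul_of_oneSidedLipschitz
    (hosl : ∀ a b : ℝ, (b - a) * (f b - f a) ≤ L * (b - a) ^ 2)
    (hx : ∀ t, 0 ≤ t → HasDerivWithinAt x (f (x t)) (Ici 0) t)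
    (hy : ∀ t, 0 ≤ t → HasDerivWithinAt y (f (y t)) (Ici 0) t) {t : ℝ} (ht : 0 ≤ t) :
    |y t - x t| ≤ exp (L * t) * |y 0 - x 0| := by
  have hanti := antitoneOn_exp_mul_sq_sub_of_oneSidedLipschitz hosl hx hy self_mem_Ici ht ht
  simp only [mul_zero, exp_zero, one_mul] at hanti
  refine abs_le_of_sq_le_sq ?_ (by positivity)
  calc (y t - x t) ^ 2
      = exp (2 * L * t) * (exp (-(2 * L) * t) * (y t - x t) ^ 2) := by
        rw [← mul_assoc, ← exp_add, show 2 * L * t + -(2 * L) * t = 0 by ring, exp_zero, one_mul]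
    _ ≤ exp (2 * L * t) * (y 0 - x 0) ^ 2 := by gcongr
    _ = (exp (L * t) * |y 0 - x 0|) ^ 2 := by
        rw [mul_pow, sq_abs, ← exp_nat_mul]; ring_nf

theorem mul_slope_sub_le_of_oneSidedLipschitz
    (hosl : ∀ a b : ℝ, (b - a) * (f b - f a) ≤ L * (b - a) ^ 2)
    (hx : ∀ t, 0 ≤ t → HasDerivWithinAt x (f (x t)) (Ici 0) t)
    (hy : ∀ t, 0 ≤ t → HasDerivWithinAt y (f (y t)) (Ici 0) t) {s : ℝ} (hs : s ∈ Ioc 0 1) :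
    (y 0 - x 0) * ((y s - y 0) / s - (x s - x 0) / s) ≤ |L| * exp |L| * (y 0 - x 0) ^ 2 := by
  obtain ⟨hs0, hs1⟩ := hs
  have hflow := abs_sub_le_exp_mul_of_oneSidedLipschitz hosl hx hy hs0.le
  have hinc : (y 0 - x 0) * ((y s - x s) - (y 0 - x 0)) ≤ (exp (L * s) - 1) * (y 0 - x 0) ^ 2 :=
    calc (y 0 - x 0) * ((y s - x s) - (y 0 - x 0))
        ≤ |y 0 - x 0| * |y s - x s| - (y 0 - x 0) ^ 2 := by
          linarith [(le_abs_self ((y 0 - x 0) * (y s - x s))).trans_eq (abs_mul _ _)]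
      _ ≤ |y 0 - x 0| * (exp (L * s) * |y 0 - x 0|) - (y 0 - x 0) ^ 2 := by gcongr
      _ = (exp (L * s) - 1) * (y 0 - x 0) ^ 2 := by rw [← sq_abs]; ring
  have hexp : exp (L * s) - 1 ≤ s * (|L| * exp |L|) :=
    calc exp (L * s) - 1 ≤ L * s * exp (L * s) := exp_sub_one_le_mul_exp _
      _ ≤ |L| * s * exp |L| := by
          gcongr
          · exact le_abs_self L
          · nlinarith [abs_nonneg L, le_abs_self L]
      _ = s * (|L| * exp |L|) := by ring
  rw [← sub_div, ← mul_div_assoc, div_le_iff₀ hs0]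
  calc (y 0 - x 0) * (y s - y 0 - (x s - x 0))
      = (y 0 - x 0) * ((y s - x s) - (y 0 - x 0)) := by ring
    _ ≤ s * (|L| * exp |L|) * (y 0 - x 0) ^ 2 := hinc.trans (by gcongr)
    _ = _ := by ring

end OneSidedLipschitz

theorem stmt1_general
    (f : ℝ → ℝ)
    (Lf : ℝ)
    (hosl : ∀ z₁ z₂ : ℝ, (z₂ - z₁) * (f z₂ - f z₁) ≤ Lf * (z₂ - z₁) ^ 2)
    (φ : ℝ → ℝ → ℝ)
    (hφ0 : ∀ z : ℝ, φ 0 z = z)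
    (hφ' : ∀ z : ℝ, ∀ s : ℝ, 0 ≤ s →
      HasDerivWithinAt (fun u => φ u z) (f (φ s z)) (Set.Ici 0) s)
    (ψ : ℝ → ℝ → ℝ)
    (hψ0 : ∀ z : ℝ, ψ 0 z = f z)
    (hψ : ∀ s : ℝ, 0 < s → ∀ z : ℝ, ψ s z = (φ s z - z) / s) :
    ∃ C : ℝ, 0 < C ∧ ∀ s ∈ Set.Icc (0:ℝ) 1, ∀ z₁ z₂ : ℝ,
      (z₂ - z₁) * (ψ s z₂ - ψ s z₁) ≤ C * (z₂ - z₁) ^ 2 := by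
  set K := |Lf| * exp |Lf|
  have hK : ∀ s ∈ Icc (0 : ℝ) 1, ∀ z₁ z₂ : ℝ, (z₂ - z₁) * (ψ s z₂ - ψ s z₁) ≤ K * (z₂ - z₁) ^ 2 := by
    rintro s ⟨hs0, hs1⟩ z₁ z₂
    rcases hs0.eq_or_lt with rfl | hs0
    · rw [hψ0, hψ0]
      have hLK : Lf ≤ K := (le_abs_self Lf).trans
        (le_mul_of_one_le_right (abs_nonneg Lf) (one_le_exp (abs_nonneg Lf)))
      exact (hosl z₁ z₂).trans (by gcongr)
    · rw [hψ s hs0, hψ s hs0]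
      simpa only [hφ0] using
        mul_slope_sub_le_of_oneSidedLipschitz hosl (hφ' z₁) (hφ' z₂) ⟨hs0, hs1⟩
  refine ⟨K + 1, by positivity, fun s hs z₁ z₂ => (hK s hs z₁ z₂).trans ?_⟩
  gcongr
  linarith

/-- If `f : ℝ → ℝ` is continuous, one-sided Lipschitz and locally Lipschitz with polynomial
growth of the local Lipschitz constant, `φ` is its flow and `ψ s z = (φ s z - z)/s` for
`s > 0`, `ψ 0 = f`, then there is `C ∈ (0,∞)` such that for all `s ∈ [0,1]` and all
`z₁, z₂ ∈ ℝ`, `(z₂ - z₁) * (ψ s z₂ - ψ s z₁) ≤ C * (z₂ - z₁)^2`. -/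
theorem stmt1
    (f : ℝ → ℝ) (hf : Continuous f)
    (Lf : ℝ) (hLf : 0 ≤ Lf)
    (hosl : ∀ z₁ z₂ : ℝ, (z₂ - z₁) * (f z₂ - f z₁) ≤ Lf * (z₂ - z₁) ^ 2)
    (q : ℕ)
    (hloc : ∀ z₁ z₂ : ℝ,
      |f z₂ - f z₁| ≤ Lf * (1 + |z₁| ^ (2 * q) + |z₂| ^ (2 * q)) * |z₂ - z₁|)
    (φ : ℝ → ℝ → ℝ)
    (hφ0 : ∀ z : ℝ, φ 0 z = z)
    (hφ' : ∀ z : ℝ, ∀ s : ℝ, 0 ≤ s →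
      HasDerivWithinAt (fun u => φ u z) (f (φ s z)) (Set.Ici 0) s)
    (ψ : ℝ → ℝ → ℝ)
    (hψ0 : ∀ z : ℝ, ψ 0 z = f z)
    (hψ : ∀ s : ℝ, 0 < s → ∀ z : ℝ, ψ s z = (φ s z - z) / s) :
    ∃ C : ℝ, 0 < C ∧ ∀ s ∈ Set.Icc (0:ℝ) 1, ∀ z₁ z₂ : ℝ,
      (z₂ - z₁) * (ψ s z₂ - ψ s z₁) ≤ C * (z₂ - z₁) ^ 2 :=
  stmt1_general f Lf hosl φ hφ0 hφ' ψ hψ0 hψ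
end

section
/- Suppose f : ℝ → ℝ is continuous, one-sided Lipschitz and locally Lipschitz with polynomial growth of the local Lipschitz constant, let φ be its flow, and define ψ_s(z) = (φ_s(z) − z)/s for s > 0 and ψ_0 = f. Then there exist q' ∈ ℕ and a constant C ∈ (0,∞) such that for all s ∈ [0,1] and all z₁, z₂ ∈ ℝ one has |ψ_s(z₂) − ψ_s(z₁)| ≤ C (1 + |z₁|^{2q'} + |z₂|^{2q'}) |z₂ − z₁|. -/
/-!
Grönwall's inequality applied to `φ_t(z)² + f(0)²` and to `(φ_t(z₂) - φ_t(z₁))²`, whose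
derivatives are controlled by the one-sided Lipschitz condition, shows that on `[0, 1]` the
flow grows at most linearly in `z` and is Lipschitz in `z`. Hence `f ∘ φ_t` inherits the
polynomial local Lipschitz bound of `f` uniformly in `t ∈ [0, 1]`, and the mean value
inequality for `t ↦ φ_t(z₂) - φ_t(z₁)` transfers this bound to
`ψ_s(z₂) - ψ_s(z₁) = ((φ_s(z₂) - φ_s(z₁)) - (z₂ - z₁)) / s`.
-/

open Set Real

theorem le_mul_exp_of_hasDerivWithinAt_le_mul {g g' : ℝ → ℝ} {K : ℝ}
    (hg : ∀ t, 0 ≤ t → HasDerivWithinAt g (g' t) (Ici 0) t)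
    (hbound : ∀ t, 0 ≤ t → g' t ≤ K * g t) {t : ℝ} (ht : 0 ≤ t) :
    g t ≤ g 0 * exp (K * t) := by
  have hcont : ContinuousOn g (Icc 0 t) := fun x hx =>
    (hg x hx.1).continuousWithinAt.mono Icc_subset_Ici_self
  have := le_gronwallBound_of_liminf_deriv_right_le (K := K) (ε := 0) hcont
    (fun x hx _ hr => ((hg x hx.1).mono (Ici_subset_Ici.2 hx.1)).liminf_right_slope_le hr)
    le_rfl (fun x hx => by simpa using hbound x hx.1) t ⟨ht, le_rfl⟩
  simpa [gronwallBound_ε0] using this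

structure IsForwardFlow (f : ℝ → ℝ) (φ : ℝ → ℝ → ℝ) : Prop where
  zero : ∀ z, φ 0 z = z
  hasDerivWithinAt : ∀ z s, 0 ≤ s → HasDerivWithinAt (fun u => φ u z) (f (φ s z)) (Ici 0) s

namespace IsForwardFlow

variable {f : ℝ → ℝ} {φ : ℝ → ℝ → ℝ} {L : ℝ}

theorem sq_add_le (hφ : IsForwardFlow f φ)
    (hosl : ∀ z₁ z₂, (z₂ - z₁) * (f z₂ - f z₁) ≤ L * (z₂ - z₁) ^ 2) (hL : 0 ≤ L) (z : ℝ) {t : ℝ}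
    (ht : 0 ≤ t) : φ t z ^ 2 + f 0 ^ 2 ≤ (z ^ 2 + f 0 ^ 2) * exp ((2 * L + 1) * t) := by
  have h := le_mul_exp_of_hasDerivWithinAt_le_mul (g := fun u => φ u z ^ 2 + f 0 ^ 2)
    (g' := fun s => 2 * φ s z * f (φ s z)) (K := 2 * L + 1) (fun s hs => ?_) (fun s _ => ?_) ht
  · simpa only [hφ.zero] using h
  · simpa using ((hφ.hasDerivWithinAt z s hs).pow 2).add_const (f 0 ^ 2)
  · -- `2 x f(x) = 2 x (f x - f 0) + 2 x f 0`, bounded by one-sided Lipschitz and AM-GM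
    have := hosl 0 (φ s z)
    simp only [sub_zero] at this
    nlinarith [sq_nonneg (φ s z - f 0), sq_nonneg (f 0)]

theorem abs_sub_le (hφ : IsForwardFlow f φ)
    (hosl : ∀ z₁ z₂, (z₂ - z₁) * (f z₂ - f z₁) ≤ L * (z₂ - z₁) ^ 2) (z₁ z₂ : ℝ) {t : ℝ}
    (ht : 0 ≤ t) : |φ t z₂ - φ t z₁| ≤ exp (L * t) * |z₂ - z₁| := by
  have hsq : (φ t z₂ - φ t z₁) ^ 2 ≤ (z₂ - z₁) ^ 2 * exp (2 * L * t) := by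
    have h := le_mul_exp_of_hasDerivWithinAt_le_mul (g := fun u => (φ u z₂ - φ u z₁) ^ 2)
      (g' := fun s => 2 * (φ s z₂ - φ s z₁) * (f (φ s z₂) - f (φ s z₁))) (K := 2 * L)
      (fun s hs => ?_) (fun s _ => ?_) ht
    · simpa only [hφ.zero] using h
    · simpa using ((hφ.hasDerivWithinAt z₂ s hs).sub (hφ.hasDerivWithinAt z₁ s hs)).fun_pow 2
    · nlinarith [hosl (φ s z₁) (φ s z₂)]
  rw [← sq_le_sq₀ (abs_nonneg _) (by positivity), sq_abs, mul_pow, sq_abs, ← exp_nat_mul]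
  refine hsq.trans_eq ?_
  rw [mul_comm]
  push_cast
  ring_nf

theorem abs_pow_le (hφ : IsForwardFlow f φ)
    (hosl : ∀ z₁ z₂, (z₂ - z₁) * (f z₂ - f z₁) ≤ L * (z₂ - z₁) ^ 2) (hL : 0 ≤ L) (q : ℕ) :
    ∃ B, 0 ≤ B ∧ ∀ t ∈ Icc (0 : ℝ) 1, ∀ z, |φ t z| ^ (2 * q) ≤ B * (1 + |z| ^ (2 * q)) := by
  set M := (1 + f 0 ^ 2) * exp (2 * L + 1)
  refine ⟨2 ^ (q - 1) * M ^ q, by positivity, fun t ht z => ?_⟩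
  have hM : φ t z ^ 2 ≤ M * (1 + z ^ 2) := by
    have h := hφ.sq_add_le hosl hL z ht.1
    have : exp ((2 * L + 1) * t) ≤ exp (2 * L + 1) := exp_le_exp.2 (by nlinarith [ht.2])
    nlinarith [sq_nonneg z, sq_nonneg (f 0), sq_nonneg (z * f 0), exp_pos ((2 * L + 1) * t),
      mul_le_mul_of_nonneg_left this (by positivity : 0 ≤ (z ^ 2 + f 0 ^ 2))]
  calc |φ t z| ^ (2 * q) = (φ t z ^ 2) ^ q := by rw [pow_mul, sq_abs]
    _ ≤ (M * (1 + z ^ 2)) ^ q := by gcongr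
    _ ≤ M ^ q * (2 ^ (q - 1) * (1 ^ q + (z ^ 2) ^ q)) := by
      rw [mul_pow]; gcongr; exact add_pow_le zero_le_one (sq_nonneg z) q
    _ = 2 ^ (q - 1) * M ^ q * (1 + |z| ^ (2 * q)) := by rw [one_pow, pow_mul, sq_abs]; ring

theorem exists_abs_sub_comp_le (hφ : IsForwardFlow f φ)
    (hosl : ∀ z₁ z₂, (z₂ - z₁) * (f z₂ - f z₁) ≤ L * (z₂ - z₁) ^ 2) (hL : 0 ≤ L) (q : ℕ)
    (hloc : ∀ z₁ z₂, |f z₂ - f z₁| ≤ L * (1 + |z₁| ^ (2 * q) + |z₂| ^ (2 * q)) * |z₂ - z₁|) :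
    ∃ C > 0, ∀ t ∈ Icc (0 : ℝ) 1, ∀ z₁ z₂, |f (φ t z₂) - f (φ t z₁)| ≤
      C * (1 + |z₁| ^ (2 * q) + |z₂| ^ (2 * q)) * |z₂ - z₁| := by
  obtain ⟨B, hB, hpow⟩ := hφ.abs_pow_le hosl hL q
  refine ⟨(L + 1) * exp L * (1 + 2 * B), by positivity, fun t ht z₁ z₂ => ?_⟩
  have hexp : exp (L * t) ≤ exp L := exp_le_exp.2 (by nlinarith [ht.2])
  have hw : 1 + |φ t z₁| ^ (2 * q) + |φ t z₂| ^ (2 * q) ≤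
      (1 + 2 * B) * (1 + |z₁| ^ (2 * q) + |z₂| ^ (2 * q)) := by
    nlinarith [hpow t ht z₁, hpow t ht z₂, pow_nonneg (abs_nonneg z₁) (2 * q),
      pow_nonneg (abs_nonneg z₂) (2 * q)]
  calc |f (φ t z₂) - f (φ t z₁)|
      ≤ L * (1 + |φ t z₁| ^ (2 * q) + |φ t z₂| ^ (2 * q)) * |φ t z₂ - φ t z₁| := hloc _ _
    _ ≤ (L + 1) * ((1 + 2 * B) * (1 + |z₁| ^ (2 * q) + |z₂| ^ (2 * q))) *
          (exp L * |z₂ - z₁|) := by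
      gcongr
      · linarith
      · exact (hφ.abs_sub_le hosl z₁ z₂ ht.1).trans (by gcongr)
    _ = _ := by ring

theorem abs_sub_sub_le (hφ : IsForwardFlow f φ) {z₁ z₂ K s : ℝ} (hs : 0 ≤ s)
    (hK : ∀ t ∈ Icc 0 s, |f (φ t z₂) - f (φ t z₁)| ≤ K) :
    |(φ s z₂ - φ s z₁) - (z₂ - z₁)| ≤ K * s := by
  have := norm_image_sub_le_of_norm_deriv_le_segment' (f := fun u => φ u z₂ - φ u z₁)
    (fun t ht => ((hφ.hasDerivWithinAt z₂ t ht.1).sub (hφ.hasDerivWithinAt z₁ t ht.1)).mono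
      Icc_subset_Ici_self) (fun t ht => hK t (Ico_subset_Icc_self ht)) s ⟨hs, le_rfl⟩
  simpa only [hφ.zero, sub_zero, Real.norm_eq_abs] using this

end IsForwardFlow

theorem stmt2_general
    (f : ℝ → ℝ)
    (Lf : ℝ) (hLf : 0 ≤ Lf)
    (hosl : ∀ z₁ z₂ : ℝ, (z₂ - z₁) * (f z₂ - f z₁) ≤ Lf * (z₂ - z₁) ^ 2)
    (q : ℕ)
    (hloc : ∀ z₁ z₂ : ℝ,
      |f z₂ - f z₁| ≤ Lf * (1 + |z₁| ^ (2 * q) + |z₂| ^ (2 * q)) * |z₂ - z₁|)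
    (φ : ℝ → ℝ → ℝ)
    (hφ0 : ∀ z : ℝ, φ 0 z = z)
    (hφ' : ∀ z : ℝ, ∀ s : ℝ, 0 ≤ s →
      HasDerivWithinAt (fun u => φ u z) (f (φ s z)) (Set.Ici 0) s)
    (ψ : ℝ → ℝ → ℝ)
    (hψ0 : ∀ z : ℝ, ψ 0 z = f z)
    (hψ : ∀ s : ℝ, 0 < s → ∀ z : ℝ, ψ s z = (φ s z - z) / s) :
    ∃ q' : ℕ, ∃ C : ℝ, 0 < C ∧ ∀ s ∈ Set.Icc (0:ℝ) 1, ∀ z₁ z₂ : ℝ,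
      |ψ s z₂ - ψ s z₁| ≤ C * (1 + |z₁| ^ (2 * q') + |z₂| ^ (2 * q')) * |z₂ - z₁| := by
  have hφ : IsForwardFlow f φ := ⟨hφ0, hφ'⟩
  obtain ⟨C, hC, hflow⟩ := hφ.exists_abs_sub_comp_le hosl hLf q hloc
  refine ⟨q, C, hC, fun s hs z₁ z₂ => ?_⟩
  rcases hs.1.eq_or_lt with rfl | hpos
  · simpa only [hψ0, hφ0] using hflow 0 ⟨le_rfl, zero_le_one⟩ z₁ z₂
  · have hdiff : ψ s z₂ - ψ s z₁ = ((φ s z₂ - φ s z₁) - (z₂ - z₁)) / s := by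
      rw [hψ s hpos, hψ s hpos]; ring
    rw [hdiff, abs_div, abs_of_pos hpos, div_le_iff₀ hpos]
    exact hφ.abs_sub_sub_le hs.1 fun t ht => hflow t ⟨ht.1, ht.2.trans hs.2⟩ z₁ z₂

/-- If `f : ℝ → ℝ` is continuous, one-sided Lipschitz and locally Lipschitz with polynomial
growth of the local Lipschitz constant, `φ` is its flow and `ψ s z = (φ s z - z)/s` for
`s > 0`, `ψ 0 = f`, then there exist `q' ∈ ℕ` and `C ∈ (0,∞)` such that for all `s ∈ [0,1]`
and all `z₁, z₂ ∈ ℝ`, `|ψ s z₂ - ψ s z₁| ≤ C * (1 + |z₁|^(2q') + |z₂|^(2q')) * |z₂ - z₁|`. -/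
theorem stmt2
    (f : ℝ → ℝ) (hf : Continuous f)
    (Lf : ℝ) (hLf : 0 ≤ Lf)
    (hosl : ∀ z₁ z₂ : ℝ, (z₂ - z₁) * (f z₂ - f z₁) ≤ Lf * (z₂ - z₁) ^ 2)
    (q : ℕ)
    (hloc : ∀ z₁ z₂ : ℝ,
      |f z₂ - f z₁| ≤ Lf * (1 + |z₁| ^ (2 * q) + |z₂| ^ (2 * q)) * |z₂ - z₁|)
    (φ : ℝ → ℝ → ℝ)
    (hφ0 : ∀ z : ℝ, φ 0 z = z)
    (hφ' : ∀ z : ℝ, ∀ s : ℝ, 0 ≤ s →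
      HasDerivWithinAt (fun u => φ u z) (f (φ s z)) (Set.Ici 0) s)
    (ψ : ℝ → ℝ → ℝ)
    (hψ0 : ∀ z : ℝ, ψ 0 z = f z)
    (hψ : ∀ s : ℝ, 0 < s → ∀ z : ℝ, ψ s z = (φ s z - z) / s) :
    ∃ q' : ℕ, ∃ C : ℝ, 0 < C ∧ ∀ s ∈ Set.Icc (0:ℝ) 1, ∀ z₁ z₂ : ℝ,
      |ψ s z₂ - ψ s z₁| ≤ C * (1 + |z₁| ^ (2 * q') + |z₂| ^ (2 * q')) * |z₂ - z₁| :=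
  stmt2_general f Lf hLf hosl q hloc φ hφ0 hφ' ψ hψ0 hψ
end

section
/- Suppose f : ℝ → ℝ is continuous, one-sided Lipschitz and locally Lipschitz with polynomial growth of the local Lipschitz constant, let φ be its flow, and define ψ_s(z) = (φ_s(z) − z)/s for s > 0 and ψ_0 = f. Then there exist q' ∈ ℕ and a constant C ∈ (0,∞) such that for all s ∈ [0,1] and all z ∈ ℝ one has |ψ_s(z) − f(z)| ≤ C s (1 + |z|^{2q'+1}). -/
/-!
Writing `(φ u z - z)²` for the squared displacement, the one-sided Lipschitz condition bounds its
derivative by `(2 Lf + 1) (φ u z - z)² + (f z)²`, so Grönwall gives `|φ u z - z| ≤ |f z| e^(2 Lf + 1)`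
for `u ≤ 1`. Hence the trajectory stays in a ball of radius `R ≍ (1 + |z|)^(2q+1)`, on which `f` is
`3 Lf R^(2q)`-Lipschitz. Two mean value estimates then give `|φ s z - z| ≲ s` and
`|φ s z - z - s f z| ≲ s²` with constants polynomial in `R`; dividing by `s` gives the bound.
-/

open Set Real

section PolyLipschitz

variable {f : ℝ → ℝ} {Lf : ℝ} {q : ℕ}

lemma abs_sub_le_of_abs_le_of_polyLipschitz (hLf : 0 ≤ Lf)
    (hloc : ∀ z₁ z₂ : ℝ,
      |f z₂ - f z₁| ≤ Lf * (1 + |z₁| ^ (2 * q) + |z₂| ^ (2 * q)) * |z₂ - z₁|)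
    {R a b : ℝ} (hR : 1 ≤ R) (ha : |a| ≤ R) (hb : |b| ≤ R) :
    |f b - f a| ≤ 3 * Lf * R ^ (2 * q) * |b - a| := by
  have hRq : 1 ≤ R ^ (2 * q) := one_le_pow₀ hR
  have hfactor : 1 + |a| ^ (2 * q) + |b| ^ (2 * q) ≤ 3 * R ^ (2 * q) := by
    linarith [pow_le_pow_left₀ (abs_nonneg a) ha (2 * q),
      pow_le_pow_left₀ (abs_nonneg b) hb (2 * q)]
  calc |f b - f a| ≤ Lf * (1 + |a| ^ (2 * q) + |b| ^ (2 * q)) * |b - a| := hloc a b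
    _ ≤ Lf * (3 * R ^ (2 * q)) * |b - a| := by gcongr
    _ = 3 * Lf * R ^ (2 * q) * |b - a| := by ring

lemma abs_le_of_polyLipschitz (hLf : 0 ≤ Lf)
    (hloc : ∀ z₁ z₂ : ℝ,
      |f z₂ - f z₁| ≤ Lf * (1 + |z₁| ^ (2 * q) + |z₂| ^ (2 * q)) * |z₂ - z₁|)
    (z : ℝ) : |f z| ≤ (|f 0| + 3 * Lf) * (1 + |z|) ^ (2 * q + 1) := by
  have hX : 1 ≤ 1 + |z| := by linarith [abs_nonneg z]
  have hXn : 1 ≤ (1 + |z|) ^ (2 * q + 1) := one_le_pow₀ hX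
  have hlip := abs_sub_le_of_abs_le_of_polyLipschitz hLf hloc hX
    (by rw [abs_zero]; linarith) (le_add_of_nonneg_left zero_le_one : |z| ≤ 1 + |z|)
  rw [sub_zero] at hlip
  have hzX : (1 + |z|) ^ (2 * q) * |z| ≤ (1 + |z|) ^ (2 * q + 1) := by
    rw [pow_succ]; gcongr; linarith
  calc |f z| ≤ |f 0| + |f z - f 0| := by simpa using abs_add_le (f 0) (f z - f 0)
    _ ≤ |f 0| * (1 + |z|) ^ (2 * q + 1) + 3 * Lf * ((1 + |z|) ^ (2 * q) * |z|) :=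
      add_le_add (le_mul_of_one_le_right (abs_nonneg _) hXn) (hlip.trans_eq (by ring))
    _ ≤ |f 0| * (1 + |z|) ^ (2 * q + 1) + 3 * Lf * (1 + |z|) ^ (2 * q + 1) := by gcongr
    _ = (|f 0| + 3 * Lf) * (1 + |z|) ^ (2 * q + 1) := by ring

end PolyLipschitz

lemma abs_sub_le_mul_of_hasDerivWithinAt_Ici {g g' : ℝ → ℝ} {C s : ℝ} (hs : 0 ≤ s)
    (hg : ∀ x ∈ Icc 0 s, HasDerivWithinAt g (g' x) (Ici 0) x)
    (hbound : ∀ x ∈ Icc 0 s, |g' x| ≤ C) : |g s - g 0| ≤ C * s := by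
  have := Convex.norm_image_sub_le_of_norm_hasDerivWithin_le
    (fun x hx => (hg x hx).mono Icc_subset_Ici_self) hbound (convex_Icc 0 s)
    (left_mem_Icc.2 hs) (right_mem_Icc.2 hs)
  simpa [abs_of_nonneg hs] using this

section Flow

variable {f : ℝ → ℝ} {φ : ℝ → ℝ → ℝ}

lemma abs_flow_sub_le {Lf : ℝ} (hLf : 0 ≤ Lf)
    (hosl : ∀ z₁ z₂ : ℝ, (z₂ - z₁) * (f z₂ - f z₁) ≤ Lf * (z₂ - z₁) ^ 2)
    (hφ0 : ∀ z : ℝ, φ 0 z = z)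
    (hφ' : ∀ z : ℝ, ∀ s : ℝ, 0 ≤ s →
      HasDerivWithinAt (fun u => φ u z) (f (φ s z)) (Set.Ici 0) s)
    (z : ℝ) {u : ℝ} (hu : 0 ≤ u) :
    |φ u z - z| ≤ |f z| * exp ((2 * Lf + 1) * u) := by
  set K := 2 * Lf + 1
  have hK : 1 ≤ K := by linarith
  have hderiv : ∀ x ∈ Ico 0 u, HasDerivWithinAt (fun x => (φ x z - z) ^ 2)
      (2 * (φ x z - z) * f (φ x z)) (Ici x) x := by
    intro x hx
    have := ((hφ' z x hx.1).sub_const z).pow 2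
    simp only [Nat.cast_ofNat] at this
    exact (this.mono (Ici_subset_Ici.2 hx.1)).congr_deriv (by ring)
  have hbound : ∀ x ∈ Ico 0 u,
      2 * (φ x z - z) * f (φ x z) ≤ K * (φ x z - z) ^ 2 + f z ^ 2 := by
    intro x _
    nlinarith [hosl z (φ x z), sq_nonneg (φ x z - z - f z)]
  have hcont : ContinuousOn (fun x => (φ x z - z) ^ 2) (Icc 0 u) := fun x hx =>
    (((hφ' z x hx.1).continuousWithinAt.sub continuousWithinAt_const).pow 2).mono
      Icc_subset_Ici_self
  have hgron := le_gronwallBound_of_liminf_deriv_right_le (δ := 0) (K := K) (ε := f z ^ 2) hcont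
    (fun x hx r hr => (hderiv x hx).liminf_right_slope_le hr) (by simp [hφ0]) hbound
    u (right_mem_Icc.2 hu)
  simp only [gronwallBound_of_K_ne_0 (by positivity : K ≠ 0), sub_zero, zero_mul, zero_add] at hgron
  have hexp : 1 ≤ exp (K * u) := one_le_exp (by positivity)
  refine abs_le_of_sq_le_sq ?_ (by positivity)
  calc (φ u z - z) ^ 2 ≤ f z ^ 2 / K * (exp (K * u) - 1) := hgron
    _ ≤ f z ^ 2 * exp (K * u) := by
      rw [div_mul_eq_mul_div, div_le_iff₀ (by positivity)]
      nlinarith [sq_nonneg (f z), mul_nonneg (sq_nonneg (f z)) (sub_nonneg.2 hexp)]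
    _ ≤ (|f z| * exp (K * u)) ^ 2 := by
      rw [mul_pow, sq_abs]
      nlinarith [sq_nonneg (f z), mul_nonneg (sq_nonneg (f z)) (sub_nonneg.2 hexp)]

lemma abs_flow_sub_sub_mul_le
    (hφ0 : ∀ z : ℝ, φ 0 z = z)
    (hφ' : ∀ z : ℝ, ∀ s : ℝ, 0 ≤ s →
      HasDerivWithinAt (fun u => φ u z) (f (φ s z)) (Set.Ici 0) s)
    {z Λ A : ℝ} (hΛ : 0 ≤ Λ)
    (hlip : ∀ u ∈ Icc (0 : ℝ) 1, |f (φ u z) - f z| ≤ Λ * |φ u z - z|)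
    (hA : ∀ u ∈ Icc (0 : ℝ) 1, |φ u z - z| ≤ A) {s : ℝ} (hs : s ∈ Icc (0 : ℝ) 1) :
    |φ s z - z - s * f z| ≤ Λ * (|f z| + Λ * A) * s ^ 2 := by
  have hlin : ∀ u ∈ Icc (0 : ℝ) 1, |φ u z - z| ≤ (|f z| + Λ * A) * u := by
    intro u hu
    simpa [hφ0] using abs_sub_le_mul_of_hasDerivWithinAt_Ici hu.1
      (fun x hx => hφ' z x hx.1) fun x hx => by
        have hx1 : x ∈ Icc (0 : ℝ) 1 := ⟨hx.1, hx.2.trans hu.2⟩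
        calc |f (φ x z)| ≤ |f z| + |f (φ x z) - f z| := by
              simpa using abs_add_le (f z) (f (φ x z) - f z)
          _ ≤ |f z| + Λ * A := by
              gcongr
              exact (hlip x hx1).trans (mul_le_mul_of_nonneg_left (hA x hx1) hΛ)
  have := abs_sub_le_mul_of_hasDerivWithinAt_Ici (g := fun u => φ u z - u * f z) hs.1
    (fun x hx => (hφ' z x hx.1).sub (hasDerivAt_mul_const (f z)).hasDerivWithinAt)
    fun x hx => by
      have hx1 : x ∈ Icc (0 : ℝ) 1 := ⟨hx.1, hx.2.trans hs.2⟩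
      have hA0 : 0 ≤ A := (abs_nonneg _).trans (hA x hx1)
      have hfA : 0 ≤ |f z| + Λ * A := by positivity
      calc |f (φ x z) - f z| ≤ Λ * |φ x z - z| := hlip x hx1
        _ ≤ Λ * ((|f z| + Λ * A) * x) := by gcongr; exact hlin x hx1
        _ ≤ Λ * ((|f z| + Λ * A) * s) := by gcongr; exact hx.2
  calc |φ s z - z - s * f z| = |(φ s z - s * f z) - (φ 0 z - 0 * f z)| := by
        rw [hφ0]; ring_nf
    _ ≤ Λ * ((|f z| + Λ * A) * s) * s := this
    _ = Λ * (|f z| + Λ * A) * s ^ 2 := by ring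

end Flow

theorem exists_abs_flow_sub_sub_mul_le {f : ℝ → ℝ} {Lf : ℝ} (hLf : 0 ≤ Lf)
    (hosl : ∀ z₁ z₂ : ℝ, (z₂ - z₁) * (f z₂ - f z₁) ≤ Lf * (z₂ - z₁) ^ 2) {q : ℕ}
    (hloc : ∀ z₁ z₂ : ℝ,
      |f z₂ - f z₁| ≤ Lf * (1 + |z₁| ^ (2 * q) + |z₂| ^ (2 * q)) * |z₂ - z₁|)
    {φ : ℝ → ℝ → ℝ} (hφ0 : ∀ z : ℝ, φ 0 z = z)
    (hφ' : ∀ z : ℝ, ∀ s : ℝ, 0 ≤ s →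
      HasDerivWithinAt (fun u => φ u z) (f (φ s z)) (Set.Ici 0) s) :
    ∃ c : ℝ, 0 ≤ c ∧ ∀ s ∈ Icc (0 : ℝ) 1, ∀ z : ℝ,
      |φ s z - z - s * f z| ≤ c * s ^ 2 * (1 + |z|) ^ ((2 * q + 1) * (4 * q + 1)) := by
  set cF := |f 0| + 3 * Lf
  set cA := cF * exp (2 * Lf + 1)
  refine ⟨3 * Lf * (cF + 3 * Lf) * (1 + cA) ^ (4 * q + 1), by positivity, fun s hs z => ?_⟩
  set X := (1 + |z|) ^ (2 * q + 1)
  set R := (1 + cA) * X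
  have hX : 1 ≤ X := one_le_pow₀ (by linarith [abs_nonneg z])
  have hzX : |z| ≤ X := (le_add_of_nonneg_left zero_le_one).trans (le_self_pow₀ (by
    linarith [abs_nonneg z]) (by omega))
  have hR : 1 ≤ R := by nlinarith [show 0 ≤ cA by positivity]
  have hfz : |f z| ≤ cF * X := abs_le_of_polyLipschitz hLf hloc z
  have hdisp : ∀ u ∈ Icc (0 : ℝ) 1, |φ u z - z| ≤ cA * X := fun u hu =>
    calc |φ u z - z| ≤ |f z| * exp ((2 * Lf + 1) * u) := abs_flow_sub_le hLf hosl hφ0 hφ' z hu.1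
      _ ≤ cF * X * exp (2 * Lf + 1) := by
        gcongr
        nlinarith [hu.2]
      _ = cA * X := by ring
  have hφR : ∀ u ∈ Icc (0 : ℝ) 1, |φ u z| ≤ R := fun u hu =>
    calc |φ u z| ≤ |z| + |φ u z - z| := by simpa using abs_add_le z (φ u z - z)
      _ ≤ X + cA * X := add_le_add hzX (hdisp u hu)
      _ = R := by ring
  have hfR : |f z| ≤ cF * R ^ (2 * q + 1) := hfz.trans (by
    gcongr
    exact (le_mul_of_one_le_left (by positivity) (by linarith [show 0 ≤ cA by positivity])).trans
      (le_self_pow₀ hR (by omega)))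
  calc |φ s z - z - s * f z|
      ≤ 3 * Lf * R ^ (2 * q) * (|f z| + 3 * Lf * R ^ (2 * q) * R) * s ^ 2 :=
        abs_flow_sub_sub_mul_le hφ0 hφ' (by positivity)
          (fun u hu => abs_sub_le_of_abs_le_of_polyLipschitz hLf hloc hR
            (hzX.trans (by nlinarith [show 0 ≤ cA by positivity])) (hφR u hu))
          (fun u hu => (hdisp u hu).trans (by nlinarith)) hs
    _ = 3 * Lf * R ^ (2 * q) * (|f z| + 3 * Lf * R ^ (2 * q + 1)) * s ^ 2 := by ring
    _ ≤ 3 * Lf * R ^ (2 * q) * (cF * R ^ (2 * q + 1) + 3 * Lf * R ^ (2 * q + 1)) * s ^ 2 := by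
        gcongr
    _ = 3 * Lf * (cF + 3 * Lf) * (1 + cA) ^ (4 * q + 1) * s ^ 2 *
          (1 + |z|) ^ ((2 * q + 1) * (4 * q + 1)) := by
        have hR4 : R ^ (2 * q) * R ^ (2 * q + 1)
            = (1 + cA) ^ (4 * q + 1) * (1 + |z|) ^ ((2 * q + 1) * (4 * q + 1)) := by
          rw [← pow_add, pow_mul (1 + |z|), ← mul_pow, show 2 * q + (2 * q + 1) = 4 * q + 1 by ring]
        linear_combination 3 * Lf * (cF + 3 * Lf) * s ^ 2 * hR4

theorem stmt3_general
    (f : ℝ → ℝ)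
    (Lf : ℝ) (hLf : 0 ≤ Lf)
    (hosl : ∀ z₁ z₂ : ℝ, (z₂ - z₁) * (f z₂ - f z₁) ≤ Lf * (z₂ - z₁) ^ 2)
    (q : ℕ)
    (hloc : ∀ z₁ z₂ : ℝ,
      |f z₂ - f z₁| ≤ Lf * (1 + |z₁| ^ (2 * q) + |z₂| ^ (2 * q)) * |z₂ - z₁|)
    (φ : ℝ → ℝ → ℝ)
    (hφ0 : ∀ z : ℝ, φ 0 z = z)
    (hφ' : ∀ z : ℝ, ∀ s : ℝ, 0 ≤ s →
      HasDerivWithinAt (fun u => φ u z) (f (φ s z)) (Set.Ici 0) s)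
    (ψ : ℝ → ℝ → ℝ)
    (hψ0 : ∀ z : ℝ, ψ 0 z = f z)
    (hψ : ∀ s : ℝ, 0 < s → ∀ z : ℝ, ψ s z = (φ s z - z) / s) :
    ∃ q' : ℕ, ∃ C : ℝ, 0 < C ∧ ∀ s ∈ Set.Icc (0:ℝ) 1, ∀ z : ℝ,
      |ψ s z - f z| ≤ C * s * (1 + |z| ^ (2 * q' + 1)) := by
  obtain ⟨c, hc, hbound⟩ := exists_abs_flow_sub_sub_mul_le hLf hosl hloc hφ0 hφ'
  set N := (2 * q + 1) * (4 * q + 1)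
  -- `N` is odd, so it has the form `2 q' + 1`.
  refine ⟨4 * q ^ 2 + 3 * q, c * 2 ^ N + 1, by positivity, fun s hs z => ?_⟩
  rw [show 2 * (4 * q ^ 2 + 3 * q) + 1 = N by ring]
  have hpow : (1 + |z|) ^ N ≤ 2 ^ N * (1 + |z| ^ N) := by
    calc (1 + |z|) ^ N ≤ 2 ^ (N - 1) * (1 ^ N + |z| ^ N) :=
          add_pow_le zero_le_one (abs_nonneg z) N
      _ ≤ 2 ^ N * (1 + |z| ^ N) := by
          rw [one_pow]; gcongr; exacts [one_le_two, Nat.sub_le N 1]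
  rcases hs.1.eq_or_lt with rfl | hs0
  · simp [hψ0]
  rw [hψ s hs0, div_sub' hs0.ne', abs_div, abs_of_pos hs0, div_le_iff₀ hs0]
  calc |φ s z - z - s * f z| ≤ c * s ^ 2 * (1 + |z|) ^ N := hbound s hs z
    _ ≤ c * s ^ 2 * (2 ^ N * (1 + |z| ^ N)) := by gcongr
    _ ≤ (c * 2 ^ N + 1) * s * (1 + |z| ^ N) * s := by nlinarith [pow_nonneg (abs_nonneg z) N]

/-- If `f : ℝ → ℝ` is continuous, one-sided Lipschitz and locally Lipschitz with polynomial
growth of the local Lipschitz constant, `φ` is its flow and `ψ s z = (φ s z - z)/s` for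
`s > 0`, `ψ 0 = f`, then there exist `q' ∈ ℕ` and `C ∈ (0,∞)` such that for all `s ∈ [0,1]`
and all `z ∈ ℝ`, `|ψ s z - f z| ≤ C * s * (1 + |z|^(2q'+1))`. -/
theorem stmt3
    (f : ℝ → ℝ) (hf : Continuous f)
    (Lf : ℝ) (hLf : 0 ≤ Lf)
    (hosl : ∀ z₁ z₂ : ℝ, (z₂ - z₁) * (f z₂ - f z₁) ≤ Lf * (z₂ - z₁) ^ 2)
    (q : ℕ)
    (hloc : ∀ z₁ z₂ : ℝ,
      |f z₂ - f z₁| ≤ Lf * (1 + |z₁| ^ (2 * q) + |z₂| ^ (2 * q)) * |z₂ - z₁|)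
    (φ : ℝ → ℝ → ℝ)
    (hφ0 : ∀ z : ℝ, φ 0 z = z)
    (hφ' : ∀ z : ℝ, ∀ s : ℝ, 0 ≤ s →
      HasDerivWithinAt (fun u => φ u z) (f (φ s z)) (Set.Ici 0) s)
    (ψ : ℝ → ℝ → ℝ)
    (hψ0 : ∀ z : ℝ, ψ 0 z = f z)
    (hψ : ∀ s : ℝ, 0 < s → ∀ z : ℝ, ψ s z = (φ s z - z) / s) :
    ∃ q' : ℕ, ∃ C : ℝ, 0 < C ∧ ∀ s ∈ Set.Icc (0:ℝ) 1, ∀ z : ℝ,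
      |ψ s z - f z| ≤ C * s * (1 + |z| ^ (2 * q' + 1)) :=
  stmt3_general f Lf hLf hosl q hloc φ hφ0 hφ' ψ hψ0 hψ
end

section
/- Let H ∈ (1/2, 1) and let (β^H(t))_{t≥0} be a real-valued fractional Brownian motion with Hurst index H. Then there exists a constant C_H ∈ (0,∞) such that for every λ ∈ (0,∞) and every t ≥ 0, the fractional Ornstein–Uhlenbeck variable 𝒵^{H,λ}(t) = β^H(t) − λ∫₀^t e^{−λ(t−s)} β^H(s) ds satisfies E[|𝒵^{H,λ}(t)|²] ≤ C_H λ^{−2H}. -/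
/-!
Integrating by parts against the kernel `λ e^{-λ(t-s)}`, whose mass on `[0, t]` is `1 - e^{-λt}`,
`𝒵(t) = e^{-λt} β(t) + ∫₀ᵗ λ e^{-λ(t-s)} (β(t) - β(s)) ds`. As the kernel has mass at most one,
Jensen bounds the square of the integral by `∫₀ᵗ λ e^{-λ(t-s)} (β(t) - β(s))² ds`, whose
expectation is `∫₀ᵗ λ e^{-λu} u^{2H} du` by Fubini, applied to a jointly measurable version of `β`
with continuous paths. With `E[(e^{-λt} β(t))²] ≤ e^{-λt} t^{2H}` this gives
`E[𝒵(t)²] ≤ 2 (e^{-λt} t^{2H} + ∫₀ᵗ λ e^{-λu} u^{2H} du) ≤ 2 Γ(2H+1) λ^{-2H}`: after the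
substitution `x = λu` the last step is `e^{-T} T^p ≤ ∫_T^∞ e^{-x} x^p dx`.
-/

open MeasureTheory

/-- The fractional Ornstein–Uhlenbeck process driven by a fractional Brownian motion `β`
with Hurst index `lam ∈ (0,∞)`, defined pathwise via the integration-by-parts formula
`𝒵^{H,λ}(t) = β(t) - λ ∫₀ᵗ exp(-λ(t-s)) β(s) ds`. -/
noncomputable def fracOU {Ω : Type*} (β : ℝ → Ω → ℝ) (lam t : ℝ) (ω : Ω) : ℝ :=
  β t ω - lam * ∫ s in (0:ℝ)..t, Real.exp (-(lam * (t - s))) * β s ω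

open Real Set Filter Function

lemma hasDerivAt_exp_neg_mul_sub (lam t s : ℝ) :
    HasDerivAt (fun u => exp (-(lam * (t - u)))) (lam * exp (-(lam * (t - s)))) s := by
  have h : HasDerivAt (fun u => -(lam * (t - u))) lam s := by
    simpa using ((hasDerivAt_id' s).const_sub t).const_mul lam |>.fun_neg
  simpa [mul_comm] using h.exp

lemma integral_mul_exp_neg_mul_sub (lam t : ℝ) :
    ∫ s in (0:ℝ)..t, lam * exp (-(lam * (t - s))) = 1 - exp (-(lam * t)) := by
  rw [intervalIntegral.integral_eq_sub_of_hasDerivAt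
    (fun s _ => hasDerivAt_exp_neg_mul_sub lam t s) (Continuous.intervalIntegrable (by fun_prop) _ _)]
  simp

lemma sub_mul_integral_exp_eq {f : ℝ → ℝ} (hf : Continuous f) (lam t : ℝ) :
    f t - lam * ∫ s in (0:ℝ)..t, exp (-(lam * (t - s))) * f s =
      exp (-(lam * t)) * f t + ∫ s in (0:ℝ)..t, lam * exp (-(lam * (t - s))) * (f t - f s) := by
  have hsplit : ∫ s in (0:ℝ)..t, lam * exp (-(lam * (t - s))) * (f t - f s)
      = (∫ s in (0:ℝ)..t, lam * exp (-(lam * (t - s)))) * f t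
        - lam * ∫ s in (0:ℝ)..t, exp (-(lam * (t - s))) * f s := by
    rw [← intervalIntegral.integral_mul_const, ← intervalIntegral.integral_const_mul,
      ← intervalIntegral.integral_sub (Continuous.intervalIntegrable (by fun_prop) _ _)
        (Continuous.intervalIntegrable (by fun_prop) _ _)]
    congr 1
    ext s
    ring
  rw [hsplit, integral_mul_exp_neg_mul_sub]
  ring

lemma sq_integral_mul_le_integral_mul_sq {α : Type*} [MeasurableSpace α] {ν : Measure α}
    {g k : α → ℝ} (hg : 0 ≤ g) (hg1 : ∫ x, g x ∂ν ≤ 1) (hgi : Integrable g ν)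
    (hgk : Integrable (fun x => g x * k x) ν) (hgk2 : Integrable (fun x => g x * k x ^ 2) ν) :
    (∫ x, g x * k x ∂ν) ^ 2 ≤ ∫ x, g x * k x ^ 2 ∂ν := by
  set I := ∫ x, g x * k x ∂ν
  have hexp : ∫ x, g x * (k x - I) ^ 2 ∂ν
      = ∫ x, g x * k x ^ 2 ∂ν - 2 * I * I + I ^ 2 * ∫ x, g x ∂ν := by
    have : (fun x => g x * (k x - I) ^ 2)
        = fun x => g x * k x ^ 2 - 2 * I * (g x * k x) + I ^ 2 * g x := by
      funext x; ring
    rw [this, integral_add, integral_sub, integral_const_mul, integral_const_mul]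
    exacts [hgk2, hgk.const_mul _, hgk2.sub (hgk.const_mul _), hgi.const_mul _]
  have h0 : 0 ≤ ∫ x, g x * (k x - I) ^ 2 ∂ν :=
    integral_nonneg fun x => mul_nonneg (hg x) (sq_nonneg _)
  nlinarith [sq_nonneg I]

lemma sq_sub_mul_integral_exp_le {f : ℝ → ℝ} (hf : Continuous f) {lam t : ℝ} (hlam : 0 < lam)
    (ht : 0 ≤ t) :
    (f t - lam * ∫ s in (0:ℝ)..t, exp (-(lam * (t - s))) * f s) ^ 2 ≤
      2 * (exp (-(lam * t)) ^ 2 * f t ^ 2) +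
        2 * ∫ s in Ioc 0 t, lam * exp (-(lam * (t - s))) * (f t - f s) ^ 2 := by
  have hmass : ∫ s in Ioc 0 t, lam * exp (-(lam * (t - s))) ≤ 1 := by
    rw [← intervalIntegral.integral_of_le ht, integral_mul_exp_neg_mul_sub]
    linarith [exp_pos (-(lam * t))]
  have hjensen := sq_integral_mul_le_integral_mul_sq (k := fun s => f t - f s)
    (fun s => (mul_pos hlam (exp_pos _)).le) hmass
    (Continuous.integrableOn_Ioc (by fun_prop)) (Continuous.integrableOn_Ioc (by fun_prop))
    (Continuous.integrableOn_Ioc (by fun_prop))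
  rw [sub_mul_integral_exp_eq hf, intervalIntegral.integral_of_le ht]
  nlinarith [mul_pow (exp (-(lam * t))) (f t) 2, sq_nonneg (exp (-(lam * t)) * f t -
    ∫ s in Ioc 0 t, lam * exp (-(lam * (t - s))) * (f t - f s))]

lemma exp_neg_mul_rpow_le_integral_Ioi {p T : ℝ} (hp : 0 ≤ p) (hT : 0 ≤ T) :
    exp (-T) * T ^ p ≤ ∫ x in Ioi T, exp (-x) * x ^ p := by
  have hGamma : IntegrableOn (fun x => exp (-x) * x ^ p) (Ioi T) := by
    simpa using (GammaIntegral_convergent (s := p + 1) (by linarith)).mono_set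
      (Ioi_subset_Ioi hT)
  rw [← integral_exp_neg_Ioi, ← integral_mul_const]
  refine setIntegral_mono_on ((integrableOn_exp_neg_Ioi T).mul_const _) hGamma measurableSet_Ioi
    fun x hx => ?_
  exact mul_le_mul_of_nonneg_left (rpow_le_rpow hT (le_of_lt hx) hp) (exp_pos _).le

lemma exp_neg_mul_rpow_add_integral_le_Gamma {p T : ℝ} (hp : 0 ≤ p) (hT : 0 ≤ T) :
    exp (-T) * T ^ p + ∫ x in (0:ℝ)..T, exp (-x) * x ^ p ≤ Gamma (p + 1) := by
  have hGamma : IntegrableOn (fun x => exp (-x) * x ^ p) (Ioi 0) := by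
    simpa using GammaIntegral_convergent (s := p + 1) (by linarith)
  rw [Gamma_eq_integral (by linarith), add_sub_cancel_right,
    ← intervalIntegral.integral_interval_add_Ioi hGamma (hGamma.mono_set (Ioi_subset_Ioi hT))]
  linarith [exp_neg_mul_rpow_le_integral_Ioi hp hT]

lemma exp_mul_rpow_add_integral_le_Gamma {p lam t : ℝ} (hp : 0 ≤ p) (hlam : 0 < lam)
    (ht : 0 ≤ t) :
    exp (-(lam * t)) * t ^ p + ∫ s in (0:ℝ)..t, lam * exp (-(lam * (t - s))) * (t - s) ^ p
      ≤ Gamma (p + 1) * lam ^ (-p) := by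
  have hscale : ∀ u, 0 ≤ u → u ^ p = lam ^ (-p) * (lam * u) ^ p := fun u hu => by
    rw [mul_rpow hlam.le hu, ← mul_assoc, ← rpow_add hlam, neg_add_cancel, rpow_zero, one_mul]
  have hint : ∫ s in (0:ℝ)..t, lam * exp (-(lam * (t - s))) * (t - s) ^ p
      = lam ^ (-p) * ∫ x in (0:ℝ)..lam * t, exp (-x) * x ^ p := by
    rw [intervalIntegral.integral_comp_sub_left (fun u => lam * exp (-(lam * u)) * u ^ p),
      sub_self, sub_zero]
    have hsub := intervalIntegral.smul_integral_comp_mul_left (fun x => exp (-x) * x ^ p) lam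
      (a := 0) (b := t)
    rw [mul_zero] at hsub
    rw [← hsub, smul_eq_mul, ← intervalIntegral.integral_const_mul,
      ← intervalIntegral.integral_const_mul]
    refine intervalIntegral.integral_congr fun u hu => ?_
    rw [uIcc_of_le ht] at hu
    simp only [hscale u hu.1]
    field_simp
  rw [hint, hscale t ht, mul_left_comm, ← mul_add, mul_comm (Gamma _)]
  exact mul_le_mul_of_nonneg_left (exp_neg_mul_rpow_add_integral_le_Gamma hp (by positivity))
    (rpow_nonneg hlam.le _)

lemma exists_modification_continuous_stronglyMeasurable {Ω : Type*} [MeasurableSpace Ω]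
    {μ : Measure Ω} {X : ℝ → Ω → ℝ} (hX : ∀ t, AEStronglyMeasurable (X t) μ)
    (hcont : ∀ᵐ ω ∂μ, ContinuousOn (fun t => X t ω) (Ici 0)) :
    ∃ Y : ℝ → Ω → ℝ, (∀ ω, Continuous fun t => Y t ω) ∧ StronglyMeasurable (uncurry Y) ∧
      ∀ᵐ ω ∂μ, ∀ t, 0 ≤ t → Y t ω = X t ω := by
  have hgood : ∀ᵐ ω ∂μ, ContinuousOn (fun t => X t ω) (Ici 0) ∧
      ∀ q : ℚ, X q ω = (hX q).mk _ ω :=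
    hcont.and (ae_all_iff.2 fun q => (hX q).ae_eq_mk)
  obtain ⟨N, hN, hNm, hN0⟩ := exists_measurable_superset_of_null (ae_iff.1 hgood)
  have hgoodN : ∀ ω ∉ N, ContinuousOn (fun t => X t ω) (Ici 0) ∧
      ∀ q : ℚ, X q ω = (hX q).mk _ ω := fun ω hω => not_not.1 fun h => hω (hN h)
  set Y : ℝ → Ω → ℝ := fun t => Nᶜ.indicator (X (max t 0))
  have hYcont : ∀ ω, Continuous fun t => Y t ω := by
    intro ω
    by_cases hω : ω ∈ N
    · simpa [Y, hω] using continuous_const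
    · simp only [Y, indicator_of_mem (mem_compl hω)]
      exact (hgoodN ω hω).1.comp_continuous (by fun_prop) fun t => le_max_right t 0
  have hYrat : ∀ q : ℚ, StronglyMeasurable (Y q) := by
    intro q
    have : Y q = Nᶜ.indicator ((hX (max q 0 : ℚ)).mk _) := by
      ext ω
      by_cases hω : ω ∈ N
      · simp [Y, hω]
      · simpa [Y, hω] using (hgoodN ω hω).2 (max q 0)
    rw [this]
    exact (hX _).stronglyMeasurable_mk.indicator hNm.compl
  have hYmeas : ∀ t, StronglyMeasurable (Y t) := by
    intro t
    obtain ⟨q, -, -, hq⟩ := Rat.denseRange_cast.exists_seq_strictMono_tendsto Rat.cast_mono t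
    exact stronglyMeasurable_of_tendsto atTop (fun n => hYrat (q n))
      (tendsto_pi_nhds.2 fun ω => ((hYcont ω).tendsto t).comp hq)
  refine ⟨Y, hYcont, stronglyMeasurable_uncurry_of_continuous_of_stronglyMeasurable hYcont hYmeas,
    measure_mono_null (fun ω hω => ?_) hN0⟩
  by_contra hωN
  exact hω fun t ht => by simp [Y, hωN, max_eq_left ht]

lemma integrable_integral_and_integral_integral_swap_of_nonneg {α β : Type*}
    [MeasurableSpace α] [MeasurableSpace β] {μ : Measure α} {ν : Measure β} [SFinite μ] [SFinite ν]
    {F : α → β → ℝ} (hF : StronglyMeasurable (uncurry F)) (hF0 : ∀ x y, 0 ≤ F x y)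
    (hint : ∀ᵐ x ∂μ, Integrable (F x) ν) (hint' : Integrable (fun x => ∫ y, F x y ∂ν) μ) :
    Integrable (fun y => ∫ x, F x y ∂μ) ν ∧ ∫ y, ∫ x, F x y ∂μ ∂ν = ∫ x, ∫ y, F x y ∂ν ∂μ := by
  have hprod : Integrable (uncurry F) (μ.prod ν) := by
    refine (integrable_prod_iff hF.aestronglyMeasurable).2 ⟨hint, ?_⟩
    simpa only [uncurry_apply_pair, norm_of_nonneg (hF0 _ _)] using hint'
  exact ⟨hprod.integral_prod_right, (integral_integral_swap hprod).symm⟩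

section Moments

variable {Ω : Type*} [MeasurableSpace Ω] {μ : Measure Ω}

lemma integral_sub_sq {f g : Ω → ℝ} (hf : MemLp f 2 μ) (hg : MemLp g 2 μ) :
    ∫ ω, (f ω - g ω) ^ 2 ∂μ =
      ∫ ω, f ω * f ω ∂μ - 2 * ∫ ω, f ω * g ω ∂μ + ∫ ω, g ω * g ω ∂μ := by
  have hff : Integrable (fun ω => f ω * f ω) μ := hf.integrable_mul hf
  have hfg : Integrable (fun ω => f ω * g ω) μ := hf.integrable_mul hg
  have hgg : Integrable (fun ω => g ω * g ω) μ := hg.integrable_mul hg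
  have : (fun ω => (f ω - g ω) ^ 2) = fun ω => f ω * f ω - 2 * (f ω * g ω) + g ω * g ω := by
    funext ω; ring
  rw [this, integral_add, integral_sub, integral_const_mul]
  exacts [hff, hfg.const_mul 2, hff.sub (hfg.const_mul 2), hgg]

variable {X : ℝ → Ω → ℝ} {H : ℝ}

lemma integral_sq_eq_rpow_of_fBm_cov (hH : 0 < H)
    (hcov : ∀ t s : ℝ, 0 ≤ t → 0 ≤ s →
      ∫ ω, X t ω * X s ω ∂μ = (t ^ (2*H) + s ^ (2*H) - |t - s| ^ (2*H)) / 2)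
    {t : ℝ} (ht : 0 ≤ t) :
    ∫ ω, X t ω ^ 2 ∂μ = t ^ (2*H) := by
  simp_rw [sq, hcov t t ht ht, sub_self, abs_zero, zero_rpow (by positivity : 2 * H ≠ 0)]
  ring

lemma integral_sub_sq_eq_rpow_of_fBm_cov (hH : 0 < H) (hL2 : ∀ t : ℝ, 0 ≤ t → MemLp (X t) 2 μ)
    (hcov : ∀ t s : ℝ, 0 ≤ t → 0 ≤ s →
      ∫ ω, X t ω * X s ω ∂μ = (t ^ (2*H) + s ^ (2*H) - |t - s| ^ (2*H)) / 2)
    {s t : ℝ} (hs : 0 ≤ s) (hst : s ≤ t) :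
    ∫ ω, (X t ω - X s ω) ^ 2 ∂μ = (t - s) ^ (2*H) := by
  have ht := hs.trans hst
  rw [integral_sub_sq (hL2 t ht) (hL2 s hs), hcov t t ht ht, hcov t s ht hs, hcov s s hs hs,
    sub_self, sub_self, abs_zero, abs_of_nonneg (sub_nonneg.2 hst),
    zero_rpow (by positivity : 2 * H ≠ 0)]
  ring

end Moments

lemma fracOU_congr {Ω : Type*} {β β' : ℝ → Ω → ℝ} {lam t : ℝ} {ω : Ω} (ht : 0 ≤ t)
    (h : ∀ s ∈ Icc 0 t, β s ω = β' s ω) : fracOU β lam t ω = fracOU β' lam t ω := by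
  rw [fracOU, fracOU, h t ⟨ht, le_rfl⟩]
  congr 2
  refine intervalIntegral.integral_congr fun s hs => ?_
  rw [uIcc_of_le ht] at hs
  simp only [h s hs]

theorem integral_sq_fracOU_le {Ω : Type*} [MeasurableSpace Ω] {μ : Measure Ω} [SFinite μ]
    {b : ℝ → Ω → ℝ} (hcont : ∀ ω, Continuous fun s => b s ω) (hb : StronglyMeasurable (uncurry b))
    {lam t : ℝ} (hlam : 0 < lam) (ht : 0 ≤ t) (hL2 : ∀ s ∈ Icc 0 t, MemLp (b s) 2 μ)
    {v : ℝ → ℝ} (hv : Continuous v) (hinc : ∀ s ∈ Icc 0 t, ∫ ω, (b t ω - b s ω) ^ 2 ∂μ = v (t - s)) :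
    ∫ ω, fracOU b lam t ω ^ 2 ∂μ ≤
      2 * (exp (-(lam * t)) ^ 2 * ∫ ω, b t ω ^ 2 ∂μ) +
        2 * ∫ s in (0:ℝ)..t, lam * exp (-(lam * (t - s))) * v (t - s) := by
  set g : ℝ → ℝ := fun s => lam * exp (-(lam * (t - s)))
  set W : Ω → ℝ := fun ω => ∫ s in Ioc 0 t, g s * (b t ω - b s ω) ^ 2
  have hbt : MemLp (b t) 2 μ := hL2 t ⟨ht, le_rfl⟩
  have hEF : ∀ s ∈ Ioc 0 t, ∫ ω, g s * (b t ω - b s ω) ^ 2 ∂μ = g s * v (t - s) := fun s hs => by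
    rw [integral_const_mul, hinc s (Ioc_subset_Icc_self hs)]
  have hFmeas : StronglyMeasurable (uncurry fun s ω => g s * (b t ω - b s ω) ^ 2) := by
    have hbt' : Measurable fun p : ℝ × Ω => b t p.2 :=
      hb.measurable.comp (measurable_const.prodMk measurable_snd)
    have hg : Measurable fun p : ℝ × Ω => g p.1 := by fun_prop
    exact (hg.mul ((hbt'.sub hb.measurable).pow_const 2)).stronglyMeasurable
  obtain ⟨hWint, hWeq⟩ := integrable_integral_and_integral_integral_swap_of_nonneg
    (μ := volume.restrict (Ioc 0 t)) (ν := μ) hFmeas (fun s ω => by positivity)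
    (by
      filter_upwards [ae_restrict_mem measurableSet_Ioc] with s hs
      exact ((hbt.sub (hL2 s (Ioc_subset_Icc_self hs))).integrable_sq).const_mul _)
    ((Continuous.integrableOn_Ioc (by fun_prop : Continuous fun s => g s * v (t - s))).congr
      ((ae_restrict_mem measurableSet_Ioc).mono fun s hs => (hEF s hs).symm))
  have hEW : ∫ ω, W ω ∂μ = ∫ s in (0:ℝ)..t, g s * v (t - s) := by
    rw [hWeq, setIntegral_congr_fun measurableSet_Ioc hEF, intervalIntegral.integral_of_le ht]
  have hbt2 : Integrable (fun ω => exp (-(lam * t)) ^ 2 * b t ω ^ 2) μ :=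
    hbt.integrable_sq.const_mul _
  calc ∫ ω, fracOU b lam t ω ^ 2 ∂μ
      ≤ ∫ ω, 2 * (exp (-(lam * t)) ^ 2 * b t ω ^ 2) + 2 * W ω ∂μ :=
        integral_mono_of_nonneg (ae_of_all _ fun ω => sq_nonneg _)
          ((hbt2.const_mul 2).add (hWint.const_mul 2))
          (ae_of_all _ fun ω => sq_sub_mul_integral_exp_le (hcont ω) hlam ht)
    _ = _ := by
        rw [integral_add (hbt2.const_mul 2) (hWint.const_mul 2), integral_const_mul,
          integral_const_mul, integral_const_mul, hEW]

theorem stmt6_general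
    {Ω : Type*} [MeasurableSpace Ω] (μ : Measure Ω) [IsProbabilityMeasure μ]
    (H : ℝ) (hH : H ∈ Set.Ioo (1/2 : ℝ) 1)
    (β : ℝ → Ω → ℝ)
    (hmeas : ∀ t : ℝ, AEStronglyMeasurable (β t) μ)
    (hpath : ∀ᵐ ω ∂μ, ContinuousOn (fun t => β t ω) (Set.Ici 0) ∧ β 0 ω = 0)
    (hL2 : ∀ t : ℝ, 0 ≤ t → MemLp (β t) 2 μ)
    (hcov : ∀ t s : ℝ, 0 ≤ t → 0 ≤ s →
      ∫ ω, β t ω * β s ω ∂μ = (t ^ (2*H) + s ^ (2*H) - |t - s| ^ (2*H)) / 2) :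
    ∃ C : ℝ, 0 < C ∧ ∀ lam : ℝ, 0 < lam → ∀ t : ℝ, 0 ≤ t →
      ∫ ω, (fracOU β lam t ω) ^ 2 ∂μ ≤ C * lam ^ (-(2*H)) := by
  have hH0 : 0 < H := by linarith [hH.1]
  obtain ⟨b, hbcont, hbmeas, hbβ⟩ :=
    exists_modification_continuous_stronglyMeasurable hmeas (hpath.mono fun _ h => h.1)
  have hbae : ∀ s, 0 ≤ s → b s =ᵐ[μ] β s := fun s hs => hbβ.mono fun ω h => h s hs
  have hL2b : ∀ s, 0 ≤ s → MemLp (b s) 2 μ := fun s hs => (hL2 s hs).ae_eq (hbae s hs).symm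
  have hcovb : ∀ t s : ℝ, 0 ≤ t → 0 ≤ s →
      ∫ ω, b t ω * b s ω ∂μ = (t ^ (2*H) + s ^ (2*H) - |t - s| ^ (2*H)) / 2 := fun t s ht hs => by
    rw [← hcov t s ht hs]
    exact integral_congr_ae (((hbae t ht).and (hbae s hs)).mono fun ω h => by simp only [h])
  refine ⟨2 * Gamma (2 * H + 1), by positivity, fun lam hlam t ht => ?_⟩
  have hbound := integral_sq_fracOU_le hbcont hbmeas hlam ht (fun s hs => hL2b s hs.1)
    (continuous_rpow_const (by positivity))
    fun s hs => integral_sub_sq_eq_rpow_of_fBm_cov hH0 hL2b hcovb hs.1 hs.2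
  rw [integral_sq_eq_rpow_of_fBm_cov hH0 hcovb ht] at hbound
  have hexp : exp (-(lam * t)) ^ 2 ≤ exp (-(lam * t)) :=
    pow_le_of_le_one (exp_pos _).le (exp_le_one_iff.2 (by nlinarith)) two_ne_zero
  calc ∫ ω, fracOU β lam t ω ^ 2 ∂μ = ∫ ω, fracOU b lam t ω ^ 2 ∂μ :=
        integral_congr_ae (hbβ.mono fun ω h => by
          simp only [fracOU_congr ht fun s hs => (h s hs.1).symm])
    _ ≤ 2 * (exp (-(lam * t)) * t ^ (2 * H) +
          ∫ s in (0:ℝ)..t, lam * exp (-(lam * (t - s))) * (t - s) ^ (2 * H)) := by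
        nlinarith [rpow_nonneg ht (2 * H)]
    _ ≤ 2 * Gamma (2 * H + 1) * lam ^ (-(2 * H)) := by
        rw [mul_assoc]
        gcongr
        exact exp_mul_rpow_add_integral_le_Gamma (by positivity) hlam ht

/-- Moment bound for the fractional Ornstein–Uhlenbeck process, case `H ∈ (1/2,1)`:
there is `C_H ∈ (0,∞)` such that `E[|𝒵^{H,λ}(t)|²] ≤ C_H λ^{-2H}` for all `λ > 0`, `t ≥ 0`. -/
theorem stmt6
    {Ω : Type*} [MeasurableSpace Ω] (μ : Measure Ω) [IsProbabilityMeasure μ]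
    (H : ℝ) (hH : H ∈ Set.Ioo (1/2 : ℝ) 1)
    (β : ℝ → Ω → ℝ)
    (hmeas : ∀ t : ℝ, AEStronglyMeasurable (β t) μ)
    (hpath : ∀ᵐ ω ∂μ, ContinuousOn (fun t => β t ω) (Set.Ici 0) ∧ β 0 ω = 0)
    (hL2 : ∀ t : ℝ, 0 ≤ t → MemLp (β t) 2 μ)
    (hmean : ∀ t : ℝ, 0 ≤ t → ∫ ω, β t ω ∂μ = 0)
    (hcov : ∀ t s : ℝ, 0 ≤ t → 0 ≤ s →
      ∫ ω, β t ω * β s ω ∂μ = (t ^ (2*H) + s ^ (2*H) - |t - s| ^ (2*H)) / 2) :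
    ∃ C : ℝ, 0 < C ∧ ∀ lam : ℝ, 0 < lam → ∀ t : ℝ, 0 ≤ t →
      ∫ ω, (fracOU β lam t ω) ^ 2 ∂μ ≤ C * lam ^ (-(2*H)) :=
  stmt6_general μ H hH β hmeas hpath hL2 hcov
end

section
/- Let H ∈ (0, 1/2) and let (β^H(t))_{t≥0} be a real-valued fractional Brownian motion with Hurst index H. Then there exists a constant C_H ∈ (0,∞) such that for every λ ∈ (0,∞) and every t ≥ 0, the fractional Ornstein–Uhlenbeck variable 𝒵^{H,λ}(t) = β^H(t) − λ∫₀^t e^{−λ(t−s)} β^H(s) ds satisfies E[|𝒵^{H,λ}(t)|²] ≤ C_H λ^{−2H}. -/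
/-!
With `k(s) = e^{-λ(t-s)}` one has `λ ∫₀ᵗ k = 1 - e^{-λt}`, hence
`𝒵(t) = e^{-λt} β(t) + λ ∫₀ᵗ k(s) (β(t) - β(s)) ds`.
Since `λ ∫₀ᵗ k ≤ 1`, Cauchy–Schwarz bounds the square of the second term by
`λ ∫₀ᵗ k(s) (β(t) - β(s))² ds`, whose expectation is, by Fubini and
`E|β(t) - β(s)|² = |t - s|^{2H}`, equal to `λ ∫₀ᵗ e^{-λu} u^{2H} du ≤ Γ(2H+1) λ^{-2H}`.
The first term contributes `e^{-2λt} t^{2H} ≤ λ^{-2H}`, because `x^{2H} ≤ eˣ` when `2H ≤ 1`.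
-/

open MeasureTheory

open Set Filter Topology TopologicalSpace Real

lemma aestronglyMeasurable_uncurry_of_ae_continuous {ι α β : Type*}
    [TopologicalSpace ι] [MetrizableSpace ι] [MeasurableSpace ι] [SecondCountableTopology ι]
    [OpensMeasurableSpace ι] [TopologicalSpace β] [PseudoMetrizableSpace β] [MeasurableSpace α]
    {ν : Measure ι} {μ : Measure α} {u : ι → α → β}
    (hu_cont : ∀ᵐ x ∂μ, Continuous fun i => u i x) (h : ∀ i, AEStronglyMeasurable (u i) μ) :
    AEStronglyMeasurable (Function.uncurry u) (ν.prod μ) := by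
  -- `u` is the a.e. limit of `(i, x) ↦ u (tₙ i) x` for simple `tₙ → id`; as `tₙ` has finite
  -- range, only finitely many null sets are discarded in replacing `u (tₙ i)` by a measurable
  -- version.
  obtain ⟨t, ht⟩ : ∃ t : ℕ → SimpleFunc ι ι, ∀ j, Tendsto (fun n => t n j) atTop (𝓝 j) :=
    ⟨stronglyMeasurable_id.approx, stronglyMeasurable_id.tendsto_approx⟩
  refine aestronglyMeasurable_of_tendsto_ae atTop (f := fun n p => u (t n p.1) p.2)
    (fun n => ⟨fun p => (h (t n p.1)).mk _ p.2, ?_, ?_⟩) ?_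
  · have hV : StronglyMeasurable (Function.uncurry fun i : (t n).range => (h i).mk _) :=
      stronglyMeasurable_uncurry_of_continuous_of_stronglyMeasurable
        (fun _ => continuous_of_discreteTopology) (fun i => (h i).stronglyMeasurable_mk)
    exact hV.comp_measurable
      (g := fun p : ι × α => (⟨t n p.1, (t n).mem_range_self p.1⟩, p.2))
      (((t n).measurable.comp measurable_fst).subtype_mk.prodMk measurable_snd)
  · have hmk : ∀ᵐ p ∂ν.prod μ, ∀ i ∈ (t n).range, u i p.2 = (h i).mk _ p.2 :=
      (eventually_all_finset _).2 fun i _ =>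
        Measure.quasiMeasurePreserving_snd.ae (h i).ae_eq_mk
    filter_upwards [hmk] with p hp using hp _ ((t n).mem_range_self p.1)
  · filter_upwards [Measure.quasiMeasurePreserving_snd.ae hu_cont] with p hp
    exact (hp.tendsto p.1).comp (ht p.1)

lemma sq_integral_mul_le_integral_mul_integral_mul_sq {α : Type*} [MeasurableSpace α]
    {ν : Measure α} {k f : α → ℝ} (hk : 0 ≤ᵐ[ν] k) (hk_int : Integrable k ν)
    (hkf : Integrable (fun x => k x * f x) ν) (hkf2 : Integrable (fun x => k x * f x ^ 2) ν) :
    (∫ x, k x * f x ∂ν) ^ 2 ≤ (∫ x, k x ∂ν) * ∫ x, k x * f x ^ 2 ∂ν := by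
  have hquad : ∀ c : ℝ, 0 ≤ (∫ x, k x ∂ν) * (c * c) + (-2 * ∫ x, k x * f x ∂ν) * c
      + ∫ x, k x * f x ^ 2 ∂ν := fun c => by
    have hexp : ∫ x, k x * (c - f x) ^ 2 ∂ν = (∫ x, k x ∂ν) * (c * c)
        + (-2 * ∫ x, k x * f x ∂ν) * c + ∫ x, k x * f x ^ 2 ∂ν := by
      have hlin : Integrable (fun x => k x * (c * c) + -2 * (k x * f x) * c) ν :=
        (hk_int.mul_const _).add ((hkf.const_mul _).mul_const _)
      rw [← integral_mul_const, ← integral_const_mul, ← integral_mul_const,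
        ← integral_add (hk_int.mul_const _) ((hkf.const_mul _).mul_const _),
        ← integral_add hlin hkf2]
      congr 1 with x
      ring
    exact hexp ▸ integral_nonneg_of_ae (hk.mono fun x hx => mul_nonneg hx (sq_nonneg _))
  have hdisc := discrim_le_zero hquad
  rw [discrim] at hdisc
  linarith

lemma rpow_le_exp {x p : ℝ} (hx : 0 ≤ x) (hp0 : 0 ≤ p) (hp1 : p ≤ 1) : x ^ p ≤ exp x := by
  rcases le_or_gt x 1 with hx1 | hx1
  · exact (rpow_le_one hx hx1 hp0).trans (one_le_exp hx)
  · calc x ^ p ≤ x ^ (1 : ℝ) := rpow_le_rpow_of_exponent_le hx1.le hp1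
      _ = x := rpow_one x
      _ ≤ exp x := by linarith [add_one_le_exp x]

lemma exp_neg_mul_mul_rpow_le {lam t p : ℝ} (hlam : 0 < lam) (ht : 0 ≤ t) (hp0 : 0 ≤ p)
    (hp1 : p ≤ 1) : exp (-(lam * t)) * t ^ p ≤ lam ^ (-p) := by
  have hscale : t ^ p = lam ^ (-p) * (lam * t) ^ p := by
    rw [mul_rpow hlam.le ht, rpow_neg hlam.le]
    field_simp [(rpow_pos_of_pos hlam p).ne']
  calc exp (-(lam * t)) * t ^ p = lam ^ (-p) * (exp (-(lam * t)) * (lam * t) ^ p) := by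
        rw [hscale]; ring
    _ ≤ lam ^ (-p) * (exp (-(lam * t)) * exp (lam * t)) := by
        gcongr; exact rpow_le_exp (by positivity) hp0 hp1
    _ = lam ^ (-p) := by rw [← exp_add, neg_add_cancel, exp_zero, mul_one]

lemma setIntegral_Ioc_exp_neg_mul_sub_mul_rpow_sub_le {lam t p : ℝ} (hlam : 0 < lam)
    (ht : 0 ≤ t) (hp : -1 < p) :
    ∫ s in Ioc 0 t, exp (-(lam * (t - s))) * (t - s) ^ p ≤ Gamma (p + 1) * lam ^ (-(p + 1)) := by
  have hGamma : ∫ u in Ioi 0, u ^ (p + 1 - 1) * exp (-(lam * u))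
      = (1 / lam) ^ (p + 1) * Gamma (p + 1) :=
    integral_rpow_mul_exp_neg_mul_Ioi (by linarith) hlam
  -- a non-integrable function would have integral `0`
  have hint : IntegrableOn (fun u => u ^ (p + 1 - 1) * exp (-(lam * u))) (Ioi 0) :=
    Integrable.of_integral_ne_zero (by
      rw [hGamma]; exact (mul_pos (by positivity) (Gamma_pos_of_pos (by linarith))).ne')
  rw [← intervalIntegral.integral_of_le ht,
    intervalIntegral.integral_comp_sub_left (fun u => exp (-(lam * u)) * u ^ p) t, sub_self,
    sub_zero, intervalIntegral.integral_of_le ht]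
  calc ∫ u in Ioc 0 t, exp (-(lam * u)) * u ^ p
      = ∫ u in Ioc 0 t, u ^ (p + 1 - 1) * exp (-(lam * u)) := by
        congr 1 with u; rw [add_sub_cancel_right, mul_comm]
    _ ≤ ∫ u in Ioi 0, u ^ (p + 1 - 1) * exp (-(lam * u)) :=
        setIntegral_mono_set hint
          ((ae_restrict_mem measurableSet_Ioi).mono fun u hu => by
            dsimp only [Pi.zero_apply]; exact mul_nonneg (rpow_nonneg hu.le _) (exp_pos _).le)
          Ioc_subset_Ioi_self.eventuallyLE
    _ = Gamma (p + 1) * lam ^ (-(p + 1)) := by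
        rw [hGamma, mul_comm, one_div, inv_rpow hlam.le, rpow_neg hlam.le]

lemma integral_exp_neg_mul_sub {lam : ℝ} (hlam : lam ≠ 0) (t : ℝ) :
    ∫ s in (0:ℝ)..t, exp (-(lam * (t - s))) = (1 - exp (-(lam * t))) / lam := by
  have hderiv : ∀ s ∈ uIcc 0 t,
      HasDerivAt (fun s => exp (-(lam * (t - s))) / lam) (exp (-(lam * (t - s)))) s := by
    intro s _
    have h : HasDerivAt (fun y => -(lam * (t - y))) lam s := by
      have h' : HasDerivAt (fun y => lam * y - lam * t) lam s := by
        simpa using ((hasDerivAt_id s).const_mul lam).sub_const (lam * t)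
      convert h' using 2 with y
      ring
    exact (h.exp.div_const lam).congr_deriv (mul_div_cancel_right₀ _ hlam)
  rw [intervalIntegral.integral_eq_sub_of_hasDerivAt hderiv
    (Continuous.intervalIntegrable (by fun_prop) _ _)]
  simp only [sub_self, mul_zero, neg_zero, exp_zero, sub_zero]
  ring

section Pathwise

variable {Ω : Type*} {β : ℝ → Ω → ℝ} {ω : Ω} {lam t : ℝ}

lemma fracOU_eq_exp_mul_add (hlam : lam ≠ 0) (ht : 0 ≤ t)
    (hβ : ContinuousOn (fun s => β s ω) (Icc 0 t)) :
    fracOU β lam t ω = exp (-(lam * t)) * β t ω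
      + lam * ∫ s in Ioc 0 t, exp (-(lam * (t - s))) * (β t ω - β s ω) := by
  have hk : IntervalIntegrable (fun s => exp (-(lam * (t - s)))) volume 0 t := by
    apply Continuous.intervalIntegrable; fun_prop
  have hkβ : IntervalIntegrable (fun s => exp (-(lam * (t - s))) * β s ω) volume 0 t :=
    (ContinuousOn.mul (by fun_prop) hβ).intervalIntegrable_of_Icc ht
  have hsplit : ∫ s in (0:ℝ)..t, exp (-(lam * (t - s))) * (β t ω - β s ω)
      = (∫ s in (0:ℝ)..t, exp (-(lam * (t - s)))) * β t ω
        - ∫ s in (0:ℝ)..t, exp (-(lam * (t - s))) * β s ω := by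
    rw [← intervalIntegral.integral_mul_const,
      ← intervalIntegral.integral_sub (hk.mul_const _) hkβ]
    congr 1 with s
    ring
  rw [← intervalIntegral.integral_of_le ht, hsplit, integral_exp_neg_mul_sub hlam, fracOU]
  field_simp
  ring

lemma sq_fracOU_le (hlam : 0 < lam) (ht : 0 ≤ t)
    (hβ : ContinuousOn (fun s => β s ω) (Icc 0 t)) :
    fracOU β lam t ω ^ 2 ≤ 2 * exp (-(2 * lam * t)) * β t ω ^ 2
      + 2 * lam * ∫ s in Ioc 0 t, exp (-(lam * (t - s))) * (β t ω - β s ω) ^ 2 := by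
  set k : ℝ → ℝ := fun s => exp (-(lam * (t - s)))
  set B := ∫ s in Ioc 0 t, k s * (β t ω - β s ω)
  set B₂ := ∫ s in Ioc 0 t, k s * (β t ω - β s ω) ^ 2
  have hk : Continuous k := by fun_prop
  have hδ : ContinuousOn (fun s => β t ω - β s ω) (Icc 0 t) := continuousOn_const.sub hβ
  have hint : ∀ {g : ℝ → ℝ}, ContinuousOn g (Icc 0 t) → IntegrableOn g (Ioc 0 t) :=
    fun hg => hg.integrableOn_Icc.mono_set Ioc_subset_Icc_self
  have hkint : ∫ s in Ioc 0 t, k s ≤ 1 / lam := by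
    rw [← intervalIntegral.integral_of_le ht, integral_exp_neg_mul_sub hlam.ne']
    gcongr
    linarith [exp_pos (-(lam * t))]
  have hCS : B ^ 2 ≤ (∫ s in Ioc 0 t, k s) * B₂ :=
    sq_integral_mul_le_integral_mul_integral_mul_sq
      (Eventually.of_forall fun s => (exp_pos _).le) (hint hk.continuousOn)
      (hint (hk.continuousOn.mul hδ)) (hint (hk.continuousOn.mul (hδ.pow 2)))
  have hB₂ : 0 ≤ B₂ :=
    setIntegral_nonneg measurableSet_Ioc fun s _ => mul_nonneg (exp_pos _).le (sq_nonneg _)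
  have hlamB : lam * B ^ 2 ≤ B₂ := by
    calc lam * B ^ 2 ≤ lam * ((1 / lam) * B₂) := by
          gcongr; exact hCS.trans (mul_le_mul_of_nonneg_right hkint hB₂)
      _ = B₂ := by field_simp
  have hexp : exp (-(2 * lam * t)) = exp (-(lam * t)) ^ 2 := by
    rw [← exp_nat_mul]; ring_nf
  rw [fracOU_eq_exp_mul_add hlam.ne' ht hβ, hexp]
  nlinarith [sq_nonneg (exp (-(lam * t)) * β t ω - lam * B)]

end Pathwise

section Covariance

variable {Ω : Type*} [MeasurableSpace Ω] {μ : Measure Ω} {β : ℝ → Ω → ℝ} {H : ℝ}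

lemma integral_sq_eq_of_covariance (hH : 0 < H)
    (hcov : ∀ t s : ℝ, 0 ≤ t → 0 ≤ s →
      ∫ ω, β t ω * β s ω ∂μ = (t ^ (2*H) + s ^ (2*H) - |t - s| ^ (2*H)) / 2)
    {t : ℝ} (ht : 0 ≤ t) : ∫ ω, β t ω ^ 2 ∂μ = t ^ (2*H) := by
  simp_rw [sq, hcov t t ht ht, sub_self, abs_zero, zero_rpow (by positivity : 2 * H ≠ 0)]
  ring

lemma integral_sq_sub_eq_of_covariance (hH : 0 < H) (hL2 : ∀ t : ℝ, 0 ≤ t → MemLp (β t) 2 μ)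
    (hcov : ∀ t s : ℝ, 0 ≤ t → 0 ≤ s →
      ∫ ω, β t ω * β s ω ∂μ = (t ^ (2*H) + s ^ (2*H) - |t - s| ^ (2*H)) / 2)
    {s t : ℝ} (hs : 0 ≤ s) (ht : 0 ≤ t) : ∫ ω, (β t ω - β s ω) ^ 2 ∂μ = |t - s| ^ (2*H) := by
  have hst : Integrable (fun ω => β t ω * β s ω) μ := (hL2 t ht).integrable_mul (hL2 s hs)
  have hexpand : (fun ω => (β t ω - β s ω) ^ 2)
      = fun ω => β t ω ^ 2 + β s ω ^ 2 - 2 * (β t ω * β s ω) := by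
    ext ω; ring
  have hsq : Integrable (fun ω => β t ω ^ 2 + β s ω ^ 2) μ :=
    (hL2 t ht).integrable_sq.add (hL2 s hs).integrable_sq
  rw [hexpand, integral_sub hsq (hst.const_mul 2),
    integral_add (hL2 t ht).integrable_sq (hL2 s hs).integrable_sq, integral_const_mul,
    integral_sq_eq_of_covariance hH hcov ht, integral_sq_eq_of_covariance hH hcov hs,
    hcov t s ht hs]
  ring

end Covariance

section StochasticProcess

variable {Ω : Type*} [MeasurableSpace Ω] {μ : Measure Ω}

lemma aestronglyMeasurable_uncurry_of_ae_continuousOn_Ici {E : Type*} [TopologicalSpace E]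
    [PseudoMetrizableSpace E] {β : ℝ → Ω → E} (hmeas : ∀ t, AEStronglyMeasurable (β t) μ)
    (hpath : ∀ᵐ ω ∂μ, ContinuousOn (fun t => β t ω) (Ici 0)) {ν : Measure ℝ}
    (hν : ∀ᵐ s ∂ν, 0 ≤ s) : AEStronglyMeasurable (Function.uncurry β) (ν.prod μ) := by
  have hext : AEStronglyMeasurable (Function.uncurry fun s => β (max s 0)) (ν.prod μ) :=
    aestronglyMeasurable_uncurry_of_ae_continuous
      (hpath.mono fun _ h => h.comp_continuous (by fun_prop) fun s => le_max_right s 0)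
      fun s => hmeas _
  refine hext.congr ?_
  filter_upwards [Measure.quasiMeasurePreserving_fst.ae hν] with p hp
  simp [Function.uncurry, max_eq_left hp]

lemma integrable_integral_mul_sq_and_integral_integral_swap {α : Type*} [MeasurableSpace α]
    {ν : Measure α} [IsFiniteMeasure ν] [SFinite μ] {X : α → Ω → ℝ} {k : α → ℝ} {K M : ℝ}
    (hX : AEStronglyMeasurable (Function.uncurry X) (ν.prod μ))
    (hL2 : ∀ᵐ s ∂ν, MemLp (X s) 2 μ) (hM : ∀ᵐ s ∂ν, ∫ ω, X s ω ^ 2 ∂μ ≤ M)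
    (hk : AEStronglyMeasurable k ν) (hK : ∀ᵐ s ∂ν, |k s| ≤ K) :
    Integrable (fun ω => ∫ s, k s * X s ω ^ 2 ∂ν) μ ∧
      ∫ ω, ∫ s, k s * X s ω ^ 2 ∂ν ∂μ = ∫ s, k s * ∫ ω, X s ω ^ 2 ∂μ ∂ν := by
  have hF_meas : AEStronglyMeasurable (fun p : α × Ω => k p.1 * X p.1 p.2 ^ 2) (ν.prod μ) :=
    (hk.comp_quasiMeasurePreserving Measure.quasiMeasurePreserving_fst).mul (hX.pow 2)
  have hnorm : ∀ᵐ s ∂ν, ∫ ω, ‖k s * X s ω ^ 2‖ ∂μ ≤ K * M := by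
    filter_upwards [hM, hK] with s hMs hKs
    simp_rw [norm_mul, norm_pow, Real.norm_eq_abs, sq_abs, integral_const_mul]
    exact mul_le_mul hKs hMs (integral_nonneg fun ω => sq_nonneg _) ((abs_nonneg _).trans hKs)
  have hF : Integrable (fun p : α × Ω => k p.1 * X p.1 p.2 ^ 2) (ν.prod μ) := by
    refine (integrable_prod_iff hF_meas).2
      ⟨hL2.mono fun s hs => hs.integrable_sq.const_mul (k s), ?_⟩
    refine (integrable_const (K * M)).mono' hF_meas.norm.integral_prod_right' ?_
    filter_upwards [hnorm] with s hs
    rwa [norm_of_nonneg (integral_nonneg fun ω => norm_nonneg _)]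
  refine ⟨hF.integral_prod_right, ?_⟩
  rw [← integral_integral_swap (f := fun s ω => k s * X s ω ^ 2) hF]
  simp_rw [integral_const_mul]

lemma integral_sq_fracOU_le_s8 [SFinite μ] {β : ℝ → Ω → ℝ} {H lam t : ℝ} (hH : 0 < H)
    (hmeas : ∀ t : ℝ, AEStronglyMeasurable (β t) μ)
    (hpath : ∀ᵐ ω ∂μ, ContinuousOn (fun t => β t ω) (Ici 0))
    (hL2 : ∀ t : ℝ, 0 ≤ t → MemLp (β t) 2 μ)
    (hcov : ∀ t s : ℝ, 0 ≤ t → 0 ≤ s →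
      ∫ ω, β t ω * β s ω ∂μ = (t ^ (2*H) + s ^ (2*H) - |t - s| ^ (2*H)) / 2)
    (hlam : 0 < lam) (ht : 0 ≤ t) :
    ∫ ω, fracOU β lam t ω ^ 2 ∂μ ≤ 2 * exp (-(2 * lam * t)) * t ^ (2*H)
      + 2 * lam * ∫ s in Ioc 0 t, exp (-(lam * (t - s))) * (t - s) ^ (2*H) := by
  have hinc : ∀ s ∈ Ioc 0 t, ∫ ω, (β t ω - β s ω) ^ 2 ∂μ = (t - s) ^ (2*H) := fun s hs => by
    rw [integral_sq_sub_eq_of_covariance hH hL2 hcov hs.1.le ht,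
      abs_of_nonneg (by linarith [hs.2])]
  have hjoint : AEStronglyMeasurable (Function.uncurry fun s ω => β t ω - β s ω)
      ((volume.restrict (Ioc 0 t)).prod μ) :=
    ((hmeas t).comp_quasiMeasurePreserving Measure.quasiMeasurePreserving_snd).sub
      (aestronglyMeasurable_uncurry_of_ae_continuousOn_Ici hmeas hpath
        (ae_restrict_of_forall_mem measurableSet_Ioc fun s hs => hs.1.le))
  obtain ⟨hJ, hEJ⟩ := integrable_integral_mul_sq_and_integral_integral_swap hjoint
    (ae_restrict_of_forall_mem measurableSet_Ioc fun s hs => (hL2 t ht).sub (hL2 s hs.1.le))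
    (ae_restrict_of_forall_mem measurableSet_Ioc fun s hs => (hinc s hs).trans_le
      (rpow_le_rpow (by linarith [hs.2]) (by linarith [hs.1]) (by positivity)))
    (k := fun s => exp (-(lam * (t - s)))) (Continuous.aestronglyMeasurable (by fun_prop))
    (ae_restrict_of_forall_mem measurableSet_Ioc fun s hs => by
      rw [abs_of_pos (exp_pos _), exp_le_one_iff]; nlinarith [hs.2])
  have hβt : Integrable (fun ω => 2 * exp (-(2 * lam * t)) * β t ω ^ 2) μ :=
    (hL2 t ht).integrable_sq.const_mul _
  calc ∫ ω, fracOU β lam t ω ^ 2 ∂μ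
      ≤ ∫ ω, (2 * exp (-(2 * lam * t)) * β t ω ^ 2
          + 2 * lam * ∫ s in Ioc 0 t, exp (-(lam * (t - s))) * (β t ω - β s ω) ^ 2) ∂μ :=
        integral_mono_of_nonneg (ae_of_all _ fun ω => sq_nonneg _) (hβt.add (hJ.const_mul _))
          (hpath.mono fun ω h => sq_fracOU_le hlam ht (h.mono Icc_subset_Ici_self))
    _ = _ := by
        rw [integral_add hβt (hJ.const_mul _), integral_const_mul, integral_const_mul,
          integral_sq_eq_of_covariance hH hcov ht, hEJ,
          setIntegral_congr_fun measurableSet_Ioc fun s hs => by rw [hinc s hs]]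

end StochasticProcess

theorem stmt8_general
    {Ω : Type*} [MeasurableSpace Ω] (μ : Measure Ω) [IsProbabilityMeasure μ]
    (H : ℝ) (hH : H ∈ Set.Ioo (0 : ℝ) (1/2))
    (β : ℝ → Ω → ℝ)
    (hmeas : ∀ t : ℝ, AEStronglyMeasurable (β t) μ)
    (hpath : ∀ᵐ ω ∂μ, ContinuousOn (fun t => β t ω) (Set.Ici 0) ∧ β 0 ω = 0)
    (hL2 : ∀ t : ℝ, 0 ≤ t → MemLp (β t) 2 μ)
    (hcov : ∀ t s : ℝ, 0 ≤ t → 0 ≤ s →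
      ∫ ω, β t ω * β s ω ∂μ = (t ^ (2*H) + s ^ (2*H) - |t - s| ^ (2*H)) / 2) :
    ∃ C : ℝ, 0 < C ∧ ∀ lam : ℝ, 0 < lam → ∀ t : ℝ, 0 ≤ t →
      ∫ ω, (fracOU β lam t ω) ^ 2 ∂μ ≤ C * lam ^ (-(2*H)) := by
  obtain ⟨hH0, hH1⟩ := hH
  have hGamma : 0 < Gamma (2*H + 1) := Gamma_pos_of_pos (by linarith)
  refine ⟨2 + 2 * Gamma (2*H + 1), by positivity, fun lam hlam t ht => ?_⟩
  have hmoment := integral_sq_fracOU_le_s8 hH0 hmeas (hpath.mono fun _ h => h.1) hL2 hcov hlam ht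
  have hfirst : exp (-(2 * lam * t)) * t ^ (2*H) ≤ lam ^ (-(2*H)) :=
    (mul_le_mul_of_nonneg_right (exp_le_exp.2 (by nlinarith)) (by positivity)).trans
      (exp_neg_mul_mul_rpow_le hlam ht (by positivity) (by linarith))
  have hsecond : lam * ∫ s in Ioc 0 t, exp (-(lam * (t - s))) * (t - s) ^ (2*H)
      ≤ Gamma (2*H + 1) * lam ^ (-(2*H)) := by
    calc _ ≤ lam * (Gamma (2*H + 1) * lam ^ (-(2*H + 1))) := by
          gcongr; exact setIntegral_Ioc_exp_neg_mul_sub_mul_rpow_sub_le hlam ht (by linarith)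
      _ = Gamma (2*H + 1) * lam ^ (-(2*H)) := by
          rw [neg_add, rpow_add hlam, rpow_neg_one]; field_simp
  linarith

/-- Moment bound for the fractional Ornstein–Uhlenbeck process, case `H ∈ (0,1/2)`:
there is `C_H ∈ (0,∞)` such that `E[|𝒵^{H,λ}(t)|²] ≤ C_H λ^{-2H}` for all `λ > 0`, `t ≥ 0`. -/
theorem stmt8
    {Ω : Type*} [MeasurableSpace Ω] (μ : Measure Ω) [IsProbabilityMeasure μ]
    (H : ℝ) (hH : H ∈ Set.Ioo (0 : ℝ) (1/2))
    (β : ℝ → Ω → ℝ)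
    (hmeas : ∀ t : ℝ, AEStronglyMeasurable (β t) μ)
    (hpath : ∀ᵐ ω ∂μ, ContinuousOn (fun t => β t ω) (Set.Ici 0) ∧ β 0 ω = 0)
    (hL2 : ∀ t : ℝ, 0 ≤ t → MemLp (β t) 2 μ)
    (hmean : ∀ t : ℝ, 0 ≤ t → ∫ ω, β t ω ∂μ = 0)
    (hcov : ∀ t s : ℝ, 0 ≤ t → 0 ≤ s →
      ∫ ω, β t ω * β s ω ∂μ = (t ^ (2*H) + s ^ (2*H) - |t - s| ^ (2*H)) / 2) :
    ∃ C : ℝ, 0 < C ∧ ∀ lam : ℝ, 0 < lam → ∀ t : ℝ, 0 ≤ t →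
      ∫ ω, (fracOU β lam t ω) ^ 2 ∂μ ≤ C * lam ^ (-(2*H)) :=
  stmt8_general μ H hH β hmeas hpath hL2 hcov
end

section
/- Let H ∈ (0, 1/2) and let (β^H(t))_{t≥0} be a real-valued fractional Brownian motion with Hurst index H. Then there exists a constant C_H ∈ (0,∞) such that for every λ ∈ (0,∞), every Δt ∈ (0,1) and every n ∈ ℕ, the discrete-time fractional Ornstein–Uhlenbeck approximation 𝒵_n^{H,λ} = Σ_{j=0}^{n−1} e^{−λ(t_n−t_j)} (β^H(t_{j+1}) − β^H(t_j)), where t_j = jΔt, satisfies E[|𝒵_n^{H,λ}|²] ≤ C_H λ^{−2H}. -/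
/-!
Summation by parts rewrites `𝒵_n` through the backward increments `u_k = β(t_n) - β(t_{n-k})`:
with `q = e^{-λΔt}`,
`𝒵_n = qⁿ u_n + (1 - q) Σ_{k<n} qᵏ u_k`.
The covariance gives `‖u_k‖_{L²} = (kΔt)^H`, so Minkowski's inequality bounds `‖𝒵_n‖_{L²}` by
`qⁿ (nΔt)^H + (1 - q) Σ_{k<n} qᵏ (kΔt)^H`. Since `x^H ≤ 1 + x ≤ 2e^{x/2}` for `x ≥ 0`, this is
at most `λ^{-H} (1 + 2(1 - q) Σ_k q^{k/2}) ≤ 5 λ^{-H}`.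
-/

open MeasureTheory

/-- The discrete-time approximation of the fractional Ornstein–Uhlenbeck process on the
uniform grid `t_j = j Δt`:
`𝒵_n^{H,λ} = Σ_{j=0}^{n-1} exp(-λ(t_n - t_j)) (β(t_{j+1}) - β(t_j))`. -/
noncomputable def fracOUdisc {Ω : Type*} (β : ℝ → Ω → ℝ) (lam Δt : ℝ) (n : ℕ) (ω : Ω) : ℝ :=
  ∑ j ∈ Finset.range n,
    Real.exp (-(lam * ((n : ℝ) * Δt - (j : ℝ) * Δt)))
      * (β (((j : ℝ) + 1) * Δt) ω - β ((j : ℝ) * Δt) ω)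

open Finset Real

theorem sum_range_pow_succ_mul_sub {R : Type*} [CommRing R] (q : R) (u : ℕ → R) (n : ℕ) :
    ∑ k ∈ range n, q ^ (k + 1) * (u (k + 1) - u k)
      = q ^ n * u n - u 0 + (1 - q) * ∑ k ∈ range n, q ^ k * u k := by
  induction n with
  | zero => simp
  | succ n ih => rw [sum_range_succ, ih, sum_range_succ]; ring

section Increments

variable {Ω : Type*}

def lagIncrement (β : ℝ → Ω → ℝ) (Δt : ℝ) (n k : ℕ) (ω : Ω) : ℝ :=
  β (n * Δt) ω - β ((n - k : ℕ) * Δt) ω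

theorem fracOUdisc_eq_sum_lagIncrement (β : ℝ → Ω → ℝ) (lam Δt : ℝ) (n : ℕ) (ω : Ω) :
    fracOUdisc β lam Δt n ω = exp (-(lam * Δt)) ^ n * lagIncrement β Δt n n ω
      + (1 - exp (-(lam * Δt)))
        * ∑ k ∈ range n, exp (-(lam * Δt)) ^ k * lagIncrement β Δt n k ω := by
  have hu0 : lagIncrement β Δt n 0 ω = 0 := by simp [lagIncrement]
  rw [← sub_zero (_ * lagIncrement β Δt n n ω), ← hu0,
    ← sum_range_pow_succ_mul_sub _ (fun k => lagIncrement β Δt n k ω), fracOUdisc,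
    ← sum_range_reflect]
  refine sum_congr rfl fun k hk => ?_
  have hkn : k + 1 ≤ n := mem_range.1 hk
  have hsub : n - 1 - k = n - (k + 1) := by omega
  have hcast : ((n - (k + 1) : ℕ) : ℝ) + 1 = ((n - k : ℕ) : ℝ) := by
    rw [Nat.cast_sub hkn, Nat.cast_sub (by omega)]; push_cast; ring
  have hexp : exp (-(lam * (n * Δt - ((n - (k + 1) : ℕ) : ℝ) * Δt)))
      = exp (-(lam * Δt)) ^ (k + 1) := by
    rw [← exp_nat_mul, Nat.cast_sub hkn]; push_cast; ring_nf
  rw [hsub, hexp, hcast, lagIncrement, lagIncrement]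
  ring

end Increments

section Scalar

variable {H : ℝ}

theorem rpow_le_one_add {x : ℝ} (hx : 0 ≤ x) (hH0 : 0 ≤ H) (hH1 : H ≤ 1) : x ^ H ≤ 1 + x := by
  rcases le_or_gt x 1 with h | h
  · linarith [rpow_le_one hx h hH0]
  · linarith [rpow_le_self_of_one_le h.le hH1]

theorem exp_neg_mul_rpow_le_one {x : ℝ} (hx : 0 ≤ x) (hH0 : 0 ≤ H) (hH1 : H ≤ 1) :
    exp (-x) * x ^ H ≤ 1 := by
  calc exp (-x) * x ^ H ≤ exp (-x) * exp x := by
        gcongr; linarith [rpow_le_one_add hx hH0 hH1, add_one_le_exp x]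
    _ = 1 := by rw [← exp_add, neg_add_cancel, exp_zero]

theorem exp_neg_mul_rpow_le_two_mul_exp_neg_half {x : ℝ} (hx : 0 ≤ x) (hH0 : 0 ≤ H)
    (hH1 : H ≤ 1) : exp (-x) * x ^ H ≤ 2 * exp (-(x / 2)) := by
  calc exp (-x) * x ^ H ≤ exp (-x) * (2 * exp (x / 2)) := by
        gcongr; linarith [rpow_le_one_add hx hH0 hH1, add_one_le_exp (x / 2)]
    _ = 2 * exp (-(x / 2)) := by rw [mul_left_comm, ← exp_add]; ring_nf

theorem one_sub_sq_mul_geom_sum_le_two {r : ℝ} (hr0 : 0 ≤ r) (hr1 : r ≤ 1) (n : ℕ) :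
    (1 - r ^ 2) * ∑ k ∈ range n, r ^ k ≤ 2 := by
  have h : (1 - r ^ 2) * ∑ k ∈ range n, r ^ k
      = (1 + r) * ((1 - r) * ∑ k ∈ range n, r ^ k) := by ring
  rw [h, mul_neg_geom_sum]
  nlinarith [pow_nonneg hr0 n]

theorem exp_weighted_rpow_sum_le_five {s : ℝ} (hH0 : 0 ≤ H) (hH1 : H ≤ 1) (hs : 0 ≤ s)
    (n : ℕ) :
    exp (-s) ^ n * (n * s) ^ H + (1 - exp (-s)) * ∑ k ∈ range n, exp (-s) ^ k * (k * s) ^ H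
      ≤ 5 := by
  have hpow : ∀ k : ℕ, exp (-s) ^ k = exp (-(k * s)) := fun k => by
    rw [← exp_nat_mul]; ring_nf
  have hks : ∀ k : ℕ, 0 ≤ (k : ℝ) * s := fun k => by positivity
  set r := exp (-(s / 2))
  have hr : exp (-s) = r ^ 2 := by rw [← exp_nat_mul]; ring_nf
  have hterm : ∀ k ∈ range n, exp (-s) ^ k * (k * s) ^ H ≤ 2 * r ^ k := fun k _ => by
    rw [hpow, ← exp_nat_mul]
    convert exp_neg_mul_rpow_le_two_mul_exp_neg_half (hks k) hH0 hH1 using 3; ring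
  have hsum : (1 - exp (-s)) * ∑ k ∈ range n, exp (-s) ^ k * (k * s) ^ H ≤ 4 := by
    calc (1 - exp (-s)) * ∑ k ∈ range n, exp (-s) ^ k * (k * s) ^ H
        ≤ (1 - exp (-s)) * ∑ k ∈ range n, 2 * r ^ k :=
          mul_le_mul_of_nonneg_left (sum_le_sum hterm)
            (sub_nonneg.2 (exp_le_one_iff.2 (by linarith)))
      _ = 2 * ((1 - r ^ 2) * ∑ k ∈ range n, r ^ k) := by rw [hr, ← mul_sum]; ring
      _ ≤ 4 := by
          linarith [one_sub_sq_mul_geom_sum_le_two (exp_pos _).le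
            (exp_le_one_iff.2 (by linarith : -(s / 2) ≤ 0)) n]
  have hlast : exp (-s) ^ n * (n * s) ^ H ≤ 1 := by
    rw [hpow]; exact exp_neg_mul_rpow_le_one (hks n) hH0 hH1
  linarith

theorem exp_weighted_rpow_sum_le_rpow_neg {lam Δt : ℝ} (hH0 : 0 ≤ H) (hH1 : H ≤ 1)
    (hlam : 0 < lam) (hΔt : 0 ≤ Δt) (n : ℕ) :
    exp (-(lam * Δt)) ^ n * (n * Δt) ^ H
        + (1 - exp (-(lam * Δt))) * ∑ k ∈ range n, exp (-(lam * Δt)) ^ k * (k * Δt) ^ H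
      ≤ 5 * lam ^ (-H) := by
  have hscale : ∀ k : ℕ, ((k : ℝ) * Δt) ^ H = lam ^ (-H) * (k * (lam * Δt)) ^ H := fun k => by
    rw [mul_left_comm, mul_rpow hlam.le (by positivity), ← mul_assoc, rpow_neg hlam.le,
      inv_mul_cancel₀ (rpow_pos_of_pos hlam H).ne', one_mul]
  calc _ = lam ^ (-H) * (exp (-(lam * Δt)) ^ n * (n * (lam * Δt)) ^ H
          + (1 - exp (-(lam * Δt)))
            * ∑ k ∈ range n, exp (-(lam * Δt)) ^ k * (k * (lam * Δt)) ^ H) := by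
        simp_rw [hscale, mul_left_comm _ (lam ^ (-H)), ← mul_sum]; ring
    _ ≤ lam ^ (-H) * 5 := by
        gcongr; exact exp_weighted_rpow_sum_le_five hH0 hH1 (by positivity) n
    _ = 5 * lam ^ (-H) := mul_comm _ _

end Scalar

section L2

variable {Ω : Type*} [MeasurableSpace Ω] {μ : Measure Ω}

theorem MeasureTheory.MemLp.sqrt_integral_sq_eq_toReal_eLpNorm {f : Ω → ℝ}
    (hf : MemLp f 2 μ) : √(∫ ω, f ω ^ 2 ∂μ) = (eLpNorm f 2 μ).toReal := by
  rw [hf.eLpNorm_eq_integral_rpow_norm two_ne_zero ENNReal.ofNat_ne_top,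
    ENNReal.toReal_ofReal (by positivity), sqrt_eq_rpow]
  norm_num

theorem sqrt_integral_sq_add_le {f g : Ω → ℝ} (hf : MemLp f 2 μ) (hg : MemLp g 2 μ) :
    √(∫ ω, (f ω + g ω) ^ 2 ∂μ) ≤ √(∫ ω, f ω ^ 2 ∂μ) + √(∫ ω, g ω ^ 2 ∂μ) := by
  have h := (hf.add hg).sqrt_integral_sq_eq_toReal_eLpNorm
  simp only [Pi.add_apply] at h
  rw [h, hf.sqrt_integral_sq_eq_toReal_eLpNorm, hg.sqrt_integral_sq_eq_toReal_eLpNorm,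
    ← ENNReal.toReal_add hf.eLpNorm_ne_top hg.eLpNorm_ne_top]
  exact ENNReal.toReal_mono (by finiteness)
    (eLpNorm_add_le hf.aestronglyMeasurable hg.aestronglyMeasurable one_le_two)

theorem sqrt_integral_sq_sum_le {ι : Type*} (s : Finset ι) {f : ι → Ω → ℝ}
    (hf : ∀ i ∈ s, MemLp (f i) 2 μ) :
    √(∫ ω, (∑ i ∈ s, f i ω) ^ 2 ∂μ) ≤ ∑ i ∈ s, √(∫ ω, f i ω ^ 2 ∂μ) := by
  have h := (memLp_finsetSum' s hf).sqrt_integral_sq_eq_toReal_eLpNorm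
  simp only [Finset.sum_apply] at h
  rw [h, sum_congr rfl fun i hi => (hf i hi).sqrt_integral_sq_eq_toReal_eLpNorm,
    ← ENNReal.toReal_sum fun i hi => (hf i hi).eLpNorm_ne_top]
  exact ENNReal.toReal_mono (ENNReal.sum_ne_top.2 fun i hi => (hf i hi).eLpNorm_ne_top)
    (eLpNorm_sum_le (fun i hi => (hf i hi).aestronglyMeasurable) one_le_two)

theorem sqrt_integral_const_mul_sq (c : ℝ) (f : Ω → ℝ) :
    √(∫ ω, (c * f ω) ^ 2 ∂μ) = |c| * √(∫ ω, f ω ^ 2 ∂μ) := by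
  simp_rw [mul_pow, integral_const_mul, sqrt_mul (sq_nonneg c), sqrt_sq_eq_abs]

end L2

section Covariance

variable {Ω : Type*} [MeasurableSpace Ω] {μ : Measure Ω} {β : ℝ → Ω → ℝ} {H : ℝ}

def HasFBMCovariance (μ : Measure Ω) (β : ℝ → Ω → ℝ) (H : ℝ) : Prop :=
  ∀ t s : ℝ, 0 ≤ t → 0 ≤ s →
    ∫ ω, β t ω * β s ω ∂μ = (t ^ (2*H) + s ^ (2*H) - |t - s| ^ (2*H)) / 2

theorem HasFBMCovariance.integral_sub_sq (hcov : HasFBMCovariance μ β H) (hH : 0 < H)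
    (hL2 : ∀ t : ℝ, 0 ≤ t → MemLp (β t) 2 μ) {t s : ℝ} (ht : 0 ≤ t) (hs : 0 ≤ s) :
    ∫ ω, (β t ω - β s ω) ^ 2 ∂μ = |t - s| ^ (2*H) := by
  have hint : ∀ a b : ℝ, 0 ≤ a → 0 ≤ b → Integrable (fun ω => β a ω * β b ω) μ :=
    fun a b ha hb => (hL2 a ha).integrable_mul (hL2 b hb)
  have hexp : (fun ω => (β t ω - β s ω) ^ 2)
      = fun ω => β t ω * β t ω + β s ω * β s ω - 2 * (β t ω * β s ω) := by
    ext ω; ring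
  have hdiag : Integrable (fun ω => β t ω * β t ω + β s ω * β s ω) μ :=
    (hint t t ht ht).add (hint s s hs hs)
  rw [hexp, integral_sub hdiag ((hint t s ht hs).const_mul 2),
    integral_add (hint t t ht ht) (hint s s hs hs), integral_const_mul, hcov t t ht ht,
    hcov s s hs hs, hcov t s ht hs]
  simp only [sub_self, abs_zero, zero_rpow (by positivity : 2 * H ≠ 0)]
  ring

theorem memLp_lagIncrement (hL2 : ∀ t : ℝ, 0 ≤ t → MemLp (β t) 2 μ) {Δt : ℝ} (hΔt : 0 ≤ Δt)
    (n k : ℕ) : MemLp (lagIncrement β Δt n k) 2 μ :=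
  (hL2 _ (by positivity)).sub (hL2 _ (by positivity))

theorem HasFBMCovariance.sqrt_integral_lagIncrement_sq (hcov : HasFBMCovariance μ β H)
    (hH : 0 < H) (hL2 : ∀ t : ℝ, 0 ≤ t → MemLp (β t) 2 μ) {Δt : ℝ} (hΔt : 0 ≤ Δt)
    {n k : ℕ} (hk : k ≤ n) :
    √(∫ ω, lagIncrement β Δt n k ω ^ 2 ∂μ) = (k * Δt) ^ H := by
  have hlag : (n : ℝ) * Δt - ((n - k : ℕ) : ℝ) * Δt = k * Δt := by
    rw [Nat.cast_sub hk]; ring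
  simp only [lagIncrement]
  rw [hcov.integral_sub_sq hH hL2 (by positivity) (by positivity), hlag,
    abs_of_nonneg (by positivity), mul_comm 2 H, rpow_mul (by positivity), rpow_two,
    sqrt_sq (by positivity)]

theorem HasFBMCovariance.sqrt_integral_fracOUdisc_sq_le (hcov : HasFBMCovariance μ β H)
    (hH : 0 < H) (hL2 : ∀ t : ℝ, 0 ≤ t → MemLp (β t) 2 μ) {lam Δt : ℝ} (hlam : 0 ≤ lam)
    (hΔt : 0 ≤ Δt) (n : ℕ) :
    √(∫ ω, fracOUdisc β lam Δt n ω ^ 2 ∂μ)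
      ≤ exp (-(lam * Δt)) ^ n * (n * Δt) ^ H
        + (1 - exp (-(lam * Δt))) * ∑ k ∈ range n, exp (-(lam * Δt)) ^ k * (k * Δt) ^ H := by
  set q := exp (-(lam * Δt))
  have hq1 : 0 ≤ 1 - q :=
    sub_nonneg.2 (exp_le_one_iff.2 (by simp only [neg_nonpos]; positivity))
  have hu := memLp_lagIncrement (μ := μ) hL2 hΔt n
  have hnorm : ∀ k ≤ n, √(∫ ω, lagIncrement β Δt n k ω ^ 2 ∂μ) = (k * Δt) ^ H :=
    fun k hk => hcov.sqrt_integral_lagIncrement_sq hH hL2 hΔt hk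
  simp_rw [fracOUdisc_eq_sum_lagIncrement]
  calc _ ≤ √(∫ ω, (q ^ n * lagIncrement β Δt n n ω) ^ 2 ∂μ)
          + √(∫ ω, ((1 - q) * ∑ k ∈ range n, q ^ k * lagIncrement β Δt n k ω) ^ 2 ∂μ) :=
        sqrt_integral_sq_add_le ((hu n).const_mul _)
          ((memLp_finsetSum _ fun k _ => (hu k).const_mul _).const_mul _)
    _ ≤ q ^ n * (n * Δt) ^ H
          + (1 - q) * ∑ k ∈ range n, √(∫ ω, (q ^ k * lagIncrement β Δt n k ω) ^ 2 ∂μ) := by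
        rw [sqrt_integral_const_mul_sq, sqrt_integral_const_mul_sq, hnorm n le_rfl,
          abs_of_nonneg (by positivity), abs_of_nonneg hq1]
        gcongr
        exact sqrt_integral_sq_sum_le _ fun k _ => (hu k).const_mul _
    _ = q ^ n * (n * Δt) ^ H + (1 - q) * ∑ k ∈ range n, q ^ k * (k * Δt) ^ H := by
        congr 2
        refine sum_congr rfl fun k hk => ?_
        rw [sqrt_integral_const_mul_sq, hnorm k (mem_range.1 hk).le,
          abs_of_nonneg (by positivity)]

end Covariance

theorem stmt13_general
    {Ω : Type*} [MeasurableSpace Ω] (μ : Measure Ω)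
    (H : ℝ) (hH : H ∈ Set.Ioo (0 : ℝ) (1/2))
    (β : ℝ → Ω → ℝ)
    (hL2 : ∀ t : ℝ, 0 ≤ t → MemLp (β t) 2 μ)
    (hcov : ∀ t s : ℝ, 0 ≤ t → 0 ≤ s →
      ∫ ω, β t ω * β s ω ∂μ = (t ^ (2*H) + s ^ (2*H) - |t - s| ^ (2*H)) / 2) :
    ∃ C : ℝ, 0 < C ∧ ∀ lam : ℝ, 0 < lam → ∀ Δt ∈ Set.Ioo (0:ℝ) 1, ∀ n : ℕ,
      ∫ ω, (fracOUdisc β lam Δt n ω) ^ 2 ∂μ ≤ C * lam ^ (-(2*H)) := by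
  obtain ⟨hH0, hH1⟩ := hH
  have hcov' : HasFBMCovariance μ β H := hcov
  refine ⟨25, by norm_num, fun lam hlam Δt hΔt n => ?_⟩
  have hbound : √(∫ ω, fracOUdisc β lam Δt n ω ^ 2 ∂μ) ≤ 5 * lam ^ (-H) :=
    (hcov'.sqrt_integral_fracOUdisc_sq_le hH0 hL2 hlam.le hΔt.1.le n).trans
      (exp_weighted_rpow_sum_le_rpow_neg hH0.le (by linarith) hlam hΔt.1.le n)
  calc ∫ ω, fracOUdisc β lam Δt n ω ^ 2 ∂μ = √(∫ ω, fracOUdisc β lam Δt n ω ^ 2 ∂μ) ^ 2 :=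
        (sq_sqrt (integral_nonneg fun ω => sq_nonneg _)).symm
    _ ≤ (5 * lam ^ (-H)) ^ 2 := pow_le_pow_left₀ (sqrt_nonneg _) hbound 2
    _ = 25 * lam ^ (-(2*H)) := by
        rw [mul_pow, ← rpow_mul_natCast hlam.le]; ring_nf

/-- Moment bound for the discrete-time fractional Ornstein–Uhlenbeck approximation, case
`H ∈ (0,1/2)`: there is `C_H ∈ (0,∞)` such that `E[|𝒵_n^{H,λ}|²] ≤ C_H λ^{-2H}` for all
`λ > 0`, `Δt ∈ (0,1)` and `n ∈ ℕ`. -/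
theorem stmt13
    {Ω : Type*} [MeasurableSpace Ω] (μ : Measure Ω) [IsProbabilityMeasure μ]
    (H : ℝ) (hH : H ∈ Set.Ioo (0 : ℝ) (1/2))
    (β : ℝ → Ω → ℝ)
    (hmeas : ∀ t : ℝ, AEStronglyMeasurable (β t) μ)
    (hpath : ∀ᵐ ω ∂μ, ContinuousOn (fun t => β t ω) (Set.Ici 0) ∧ β 0 ω = 0)
    (hL2 : ∀ t : ℝ, 0 ≤ t → MemLp (β t) 2 μ)
    (hmean : ∀ t : ℝ, 0 ≤ t → ∫ ω, β t ω ∂μ = 0)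
    (hcov : ∀ t s : ℝ, 0 ≤ t → 0 ≤ s →
      ∫ ω, β t ω * β s ω ∂μ = (t ^ (2*H) + s ^ (2*H) - |t - s| ^ (2*H)) / 2) :
    ∃ C : ℝ, 0 < C ∧ ∀ lam : ℝ, 0 < lam → ∀ Δt ∈ Set.Ioo (0:ℝ) 1, ∀ n : ℕ,
      ∫ ω, (fracOUdisc β lam Δt n ω) ^ 2 ∂μ ≤ C * lam ^ (-(2*H)) :=
  stmt13_general μ H hH β hL2 hcov
end

section
/- Let H ∈ (0, 1/2). Then there exists a constant C_H ∈ (0,∞) such that for every λ ∈ (0,∞) and all 0 ≤ t₁ ≤ t₂ one has ∫_{λt₁}^{λt₂} r^{2H−1} e^{−2(λt₂ − r)} dr ≤ C_H (min(1, λ(t₂ − t₁)))^{2H}. -/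
/-! Write `a = λ t₁`, `b = λ t₂`, `p = 2H`. On `[a, b]` the exponential factor is at most `1`,
so the integral is at most `∫ r in a..b, r ^ (p - 1) = (b ^ p - a ^ p) / p ≤ (b - a) ^ p / p`
by subadditivity of `x ↦ x ^ p` for `p ≤ 1`. When `b - a ≥ 1` the interval is enlarged to
`[0, b]`: the piece over `[0, 1]` is at most `1 / p`, and on `[1, b]` the power is at most `1`,
leaving `∫ r in 1..b, exp (-(2 * (b - r))) ≤ 1 / 2`. -/

open MeasureTheory intervalIntegral Real

theorem Real.rpow_sub_rpow_le_rpow_sub {x y p : ℝ} (hx : 0 ≤ x) (hxy : x ≤ y) (hp : 0 ≤ p)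
    (hp1 : p ≤ 1) : y ^ p - x ^ p ≤ (y - x) ^ p := by
  have := Real.rpow_add_le_add_rpow hx (sub_nonneg.2 hxy) hp hp1
  rw [add_sub_cancel] at this
  linarith

theorem integral_exp_neg_mul_sub_s16 {c : ℝ} (hc : c ≠ 0) (a b : ℝ) :
    ∫ r in a..b, exp (-(c * (b - r))) = (1 - exp (-(c * (b - a)))) / c := by
  have key := integral_comp_mul_add exp hc (-(c * b)) (a := a) (b := b)
  rw [integral_exp, add_neg_cancel, exp_zero, smul_eq_mul] at key
  convert key using 1
  · congr 1; ext r; ring_nf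
  · rw [inv_mul_eq_div]; ring_nf

theorem integral_rpow_sub_one {p : ℝ} (hp : 0 < p) (a b : ℝ) :
    ∫ r in a..b, r ^ (p - 1) = (b ^ p - a ^ p) / p := by
  rw [integral_rpow (Or.inl (by linarith)), sub_add_cancel]

section

variable {p : ℝ} {a b : ℝ}

theorem intervalIntegrable_rpow_sub_one_mul_exp (hp : 0 < p) (c : ℝ) :
    IntervalIntegrable (fun r => r ^ (p - 1) * exp (-(2 * (c - r)))) volume a b :=
  (intervalIntegrable_rpow' (by linarith)).mul_continuousOn (by fun_prop)

theorem rpow_sub_one_mul_exp_le_rpow {r : ℝ} (hr : 0 ≤ r) (hrb : r ≤ b) :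
    r ^ (p - 1) * exp (-(2 * (b - r))) ≤ r ^ (p - 1) :=
  mul_le_of_le_one_right (rpow_nonneg hr _) (exp_le_one_iff.2 (by linarith))

theorem integral_rpow_sub_one_mul_exp_le_rpow_sub (hp : 0 < p) (hp1 : p ≤ 1) (ha : 0 ≤ a)
    (hab : a ≤ b) :
    ∫ r in a..b, r ^ (p - 1) * exp (-(2 * (b - r))) ≤ (b - a) ^ p / p := by
  calc ∫ r in a..b, r ^ (p - 1) * exp (-(2 * (b - r)))
      ≤ ∫ r in a..b, r ^ (p - 1) :=
        integral_mono_on hab (intervalIntegrable_rpow_sub_one_mul_exp hp b)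
          (intervalIntegrable_rpow' (by linarith))
          fun r hr => rpow_sub_one_mul_exp_le_rpow (ha.trans hr.1) hr.2
    _ = (b ^ p - a ^ p) / p := integral_rpow_sub_one hp a b
    _ ≤ (b - a) ^ p / p := by gcongr; exact rpow_sub_rpow_le_rpow_sub ha hab hp.le hp1

theorem integral_rpow_sub_one_mul_exp_le_of_one_le (hp : 0 < p) (hp1 : p ≤ 1) (ha : 0 ≤ a)
    (hab : a ≤ b) (hb : 1 ≤ b) :
    ∫ r in a..b, r ^ (p - 1) * exp (-(2 * (b - r))) ≤ 1 / p + 1 / 2 := by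
  have hint (x y : ℝ) := intervalIntegrable_rpow_sub_one_mul_exp (a := x) (b := y) hp b
  have hnonneg : 0 ≤ᵐ[volume.restrict (Set.Ioc 0 b)]
      fun r => r ^ (p - 1) * exp (-(2 * (b - r))) :=
    (ae_restrict_iff' measurableSet_Ioc).2 <| .of_forall fun r hr =>
      mul_nonneg (rpow_nonneg hr.1.le _) (exp_nonneg _)
  calc ∫ r in a..b, r ^ (p - 1) * exp (-(2 * (b - r)))
      ≤ ∫ r in (0 : ℝ)..b, r ^ (p - 1) * exp (-(2 * (b - r))) :=
        integral_mono_interval ha hab le_rfl hnonneg (hint 0 b)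
    _ = (∫ r in (0 : ℝ)..1, r ^ (p - 1) * exp (-(2 * (b - r))))
          + ∫ r in (1 : ℝ)..b, r ^ (p - 1) * exp (-(2 * (b - r))) :=
        (integral_add_adjacent_intervals (hint 0 1) (hint 1 b)).symm
    _ ≤ (∫ r in (0 : ℝ)..1, r ^ (p - 1)) + ∫ r in (1 : ℝ)..b, exp (-(2 * (b - r))) := by
        gcongr
        · exact integral_mono_on zero_le_one (hint 0 1) (intervalIntegrable_rpow' (by linarith))
            fun r hr => rpow_sub_one_mul_exp_le_rpow hr.1 (hr.2.trans hb)
        · have hexp : Continuous fun r => exp (-(2 * (b - r))) := by fun_prop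
          exact integral_mono_on hb (hint 1 b) (hexp.intervalIntegrable _ _) fun r hr =>
            mul_le_of_le_one_left (exp_nonneg _)
              (rpow_le_one_of_one_le_of_nonpos hr.1 (by linarith))
    _ ≤ 1 / p + 1 / 2 := by
        rw [integral_rpow_sub_one hp, integral_exp_neg_mul_sub_s16 two_ne_zero, one_rpow,
          zero_rpow hp.ne']
        have := exp_pos (-(2 * (b - 1)))
        gcongr <;> linarith

theorem integral_rpow_sub_one_mul_exp_le_min (hp : 0 < p) (hp1 : p ≤ 1) (ha : 0 ≤ a)
    (hab : a ≤ b) :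
    ∫ r in a..b, r ^ (p - 1) * exp (-(2 * (b - r))) ≤ (1 / p + 1 / 2) * min 1 (b - a) ^ p := by
  rcases le_total (b - a) 1 with hba | hba
  · rw [min_eq_right hba]
    calc _ ≤ (b - a) ^ p / p := integral_rpow_sub_one_mul_exp_le_rpow_sub hp hp1 ha hab
      _ ≤ (1 / p + 1 / 2) * (b - a) ^ p := by
        rw [div_eq_inv_mul, one_div]
        gcongr
        linarith
  · rw [min_eq_left hba, one_rpow, mul_one]
    exact integral_rpow_sub_one_mul_exp_le_of_one_le hp hp1 ha hab (by linarith)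

end

/-- For `H ∈ (0,1/2)` there exists `C_H ∈ (0,∞)` such that for all `λ > 0` and
`0 ≤ t₁ ≤ t₂`, `∫_{λt₁}^{λt₂} r^{2H-1} e^{-2(λt₂ - r)} dr ≤ C_H (min(1, λ(t₂-t₁)))^{2H}`. -/
theorem stmt16 (H : ℝ) (hH : H ∈ Set.Ioo (0 : ℝ) (1/2)) :
    ∃ C : ℝ, 0 < C ∧ ∀ lam : ℝ, 0 < lam → ∀ t₁ t₂ : ℝ, 0 ≤ t₁ → t₁ ≤ t₂ →
      (∫ r in (lam * t₁)..(lam * t₂), r ^ (2*H - 1) * Real.exp (-(2 * (lam * t₂ - r))))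
        ≤ C * (min 1 (lam * (t₂ - t₁))) ^ (2*H) := by
  obtain ⟨hH0, hH1⟩ := hH
  refine ⟨1 / (2 * H) + 1 / 2, by positivity, fun lam hlam t₁ t₂ ht₁ ht => ?_⟩
  rw [mul_sub]
  exact integral_rpow_sub_one_mul_exp_le_min (by linarith) (by linarith)
    (mul_nonneg hlam.le ht₁) (mul_le_mul_of_nonneg_left ht hlam.le)
end

section
/- Let H ∈ (0, 1/2). Then there exists a constant C_H ∈ (0,∞) such that for every λ ∈ (0,∞) and every t ≥ 0 one has ∫₀^t ( ∫_s^t (e^{−λ(t−τ)} − e^{−λ(t−s)}) (τ − s)^{H−3/2} dτ )² ds ≤ C_H λ^{−2H}. -/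
open MeasureTheory Set
open scoped ENNReal

/-! Write the integrand as `e^{-λ(t-τ)} ψ_λ(τ-s)` with `ψ_λ(u) = (1 - e^{-λu}) u^{H-3/2}`. The inner
integral is then a correlation of the weight `e^{-λ(t-·)}`, whose `L¹` norm on `(-∞, t]` is `1/λ`,
with `ψ_λ`; Cauchy–Schwarz and Tonelli (Young's inequality `L¹ ⋆ L² ⊆ L²`) bound the left-hand side
by `λ⁻² ‖ψ_λ‖₂²`. Rescaling gives `‖ψ_λ‖₂² = λ^{2-2H} ‖ψ_1‖₂²`, and `ψ_1` is square integrable on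
`(0, ∞)`: `ψ_1(u)²` behaves like `u^{2H-1}` at `0` and like `u^{2H-3}` at `∞`, both integrable
for `0 < H < 1/2`. -/

theorem sq_lintegral_mul_le {α : Type*} [MeasurableSpace α] {μ : Measure α} {w f : α → ℝ≥0∞}
    (hw : AEMeasurable w μ) (hf : AEMeasurable f μ) :
    (∫⁻ x, w x * f x ∂μ) ^ 2 ≤ (∫⁻ x, w x ∂μ) * ∫⁻ x, w x * f x ^ 2 ∂μ := by
  have hsqrt : ∀ a : ℝ≥0∞, (a ^ (1/2 : ℝ)) ^ 2 = a := fun a => by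
    rw [← ENNReal.rpow_natCast, ← ENNReal.rpow_mul]; norm_num
  have hsplit : ∀ x, w x * f x = w x ^ (1/2 : ℝ) * (w x * f x ^ 2) ^ (1/2 : ℝ) := fun x => by
    rw [ENNReal.mul_rpow_of_nonneg _ _ (by norm_num), ← mul_assoc,
      ← ENNReal.rpow_add_of_nonneg _ _ (by norm_num) (by norm_num), ← ENNReal.rpow_natCast,
      ← ENNReal.rpow_mul]
    norm_num
  calc (∫⁻ x, w x * f x ∂μ) ^ 2
      ≤ ((∫⁻ x, w x ∂μ) ^ (1/2 : ℝ) * (∫⁻ x, w x * f x ^ 2 ∂μ) ^ (1/2 : ℝ)) ^ 2 := by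
        simp_rw [hsplit]
        gcongr
        exact ENNReal.lintegral_mul_norm_pow_le hw (hw.mul (hf.pow_const 2)) (by norm_num)
          (by norm_num) (by norm_num)
    _ = _ := by rw [mul_pow, hsqrt, hsqrt]

theorem lintegral_sq_lintegral_mul_sub_le {G : Type*} [MeasurableSpace G] [AddGroup G]
    [MeasurableAdd₂ G] [MeasurableNeg G] {μ : Measure G} [SFinite μ] [μ.IsAddLeftInvariant]
    [μ.IsNegInvariant] {w ψ : G → ℝ≥0∞} (hw : Measurable w) (hψ : Measurable ψ) :
    ∫⁻ s, (∫⁻ τ, w τ * ψ (τ - s) ∂μ) ^ 2 ∂μ ≤ (∫⁻ τ, w τ ∂μ) ^ 2 * ∫⁻ u, ψ u ^ 2 ∂μ := by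
  have hψ₂ : Measurable fun p : G × G => ψ (p.2 - p.1) ^ 2 := (hψ.comp (by fun_prop)).pow_const 2
  calc ∫⁻ s, (∫⁻ τ, w τ * ψ (τ - s) ∂μ) ^ 2 ∂μ
      ≤ ∫⁻ s, (∫⁻ τ, w τ ∂μ) * ∫⁻ τ, w τ * ψ (τ - s) ^ 2 ∂μ ∂μ :=
        lintegral_mono fun s =>
          sq_lintegral_mul_le hw.aemeasurable (hψ.comp (measurable_sub_const s)).aemeasurable
    _ = (∫⁻ τ, w τ ∂μ) * ∫⁻ τ, ∫⁻ s, w τ * ψ (τ - s) ^ 2 ∂μ ∂μ := by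
        rw [lintegral_const_mul _ ?_, lintegral_lintegral_swap ?_]
        · exact ((hw.comp measurable_snd).mul hψ₂).aemeasurable
        · exact Measurable.lintegral_prod_right' ((hw.comp measurable_snd).mul hψ₂)
    _ = (∫⁻ τ, w τ ∂μ) ^ 2 * ∫⁻ u, ψ u ^ 2 ∂μ := by
        have hinner : ∀ τ, ∫⁻ s, w τ * ψ (τ - s) ^ 2 ∂μ = w τ * ∫⁻ u, ψ u ^ 2 ∂μ := fun τ => by
          rw [lintegral_const_mul _ (by fun_prop),
            lintegral_sub_left_eq_self (fun u => ψ u ^ 2) τ]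
        simp_rw [hinner, lintegral_mul_const _ hw, sq, mul_assoc]

theorem enorm_intervalIntegral_sq_intervalIntegral_mul_sub_le {f g : ℝ → ℝ} (hf : Measurable f)
    (hg : Measurable g) {t : ℝ} (ht : 0 ≤ t) :
    ‖∫ s in (0:ℝ)..t, (∫ τ in s..t, f τ * g (τ - s)) ^ 2‖ₑ
      ≤ (∫⁻ τ in Iic t, ‖f τ‖ₑ) ^ 2 * ∫⁻ u in Ioi 0, ‖g u‖ₑ ^ 2 := by
  -- on `τ ∈ (s, t]` the inner integrand is the full-line correlation of `W` with `Ψ`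
  set W := (Iic t).indicator fun τ => ‖f τ‖ₑ
  set Ψ := (Ioi 0).indicator fun u => ‖g u‖ₑ
  have hinner : ∀ s ≤ t, ‖∫ τ in s..t, f τ * g (τ - s)‖ₑ ≤ ∫⁻ τ, W τ * Ψ (τ - s) := by
    intro s hs
    rw [intervalIntegral.integral_of_le hs]
    refine (enorm_integral_le_lintegral_enorm _).trans
      (le_of_eq_of_le ?_ (setLIntegral_le_lintegral (Ioc s t) _))
    refine setLIntegral_congr_fun measurableSet_Ioc fun τ hτ => ?_
    simp [W, Ψ, enorm_mul, hτ.2, hτ.1]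
  calc ‖∫ s in (0:ℝ)..t, (∫ τ in s..t, f τ * g (τ - s)) ^ 2‖ₑ
      ≤ ∫⁻ s in Ioc 0 t, ‖∫ τ in s..t, f τ * g (τ - s)‖ₑ ^ 2 := by
        rw [intervalIntegral.integral_of_le ht]
        refine (enorm_integral_le_lintegral_enorm _).trans_eq ?_
        simp only [enorm_pow]
    _ ≤ ∫⁻ s in Ioc 0 t, (∫⁻ τ, W τ * Ψ (τ - s)) ^ 2 :=
        setLIntegral_mono' measurableSet_Ioc fun s hs => by gcongr; exact hinner s hs.2
    _ ≤ ∫⁻ s, (∫⁻ τ, W τ * Ψ (τ - s)) ^ 2 := setLIntegral_le_lintegral _ _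
    _ ≤ (∫⁻ τ, W τ) ^ 2 * ∫⁻ u, Ψ u ^ 2 :=
        lintegral_sq_lintegral_mul_sub_le (hf.enorm.indicator measurableSet_Iic)
          (hg.enorm.indicator measurableSet_Ioi)
    _ = (∫⁻ τ in Iic t, ‖f τ‖ₑ) ^ 2 * ∫⁻ u in Ioi 0, ‖g u‖ₑ ^ 2 := by
        rw [lintegral_indicator measurableSet_Iic, ← lintegral_indicator measurableSet_Ioi]
        congr 2 with u
        by_cases hu : u ∈ Ioi 0 <;> simp [Ψ, hu]

theorem setLIntegral_Ioi_zero_comp_mul_left (g : ℝ → ℝ≥0∞) {c : ℝ} (hc : 0 < c) :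
    ∫⁻ u in Ioi 0, g (c * u) = ENNReal.ofReal c⁻¹ * ∫⁻ u in Ioi 0, g u := by
  have hind : ∀ u, (Ioi 0).indicator (fun u => g (c * u)) u = (Ioi 0).indicator g (c * u) :=
    fun u => by simp [indicator_apply, mul_pos_iff_of_pos_left hc]
  rw [← lintegral_indicator measurableSet_Ioi, ← lintegral_indicator measurableSet_Ioi]
  simp_rw [hind]
  have h := lintegral_map_equiv ((Ioi 0).indicator g) (MeasurableEquiv.mulLeft₀ c hc.ne')
    (μ := volume)
  rw [MeasurableEquiv.coe_mulLeft₀, Real.map_volume_mul_left hc.ne', lintegral_smul_measure,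
    abs_of_pos (inv_pos.2 hc)] at h
  exact h.symm

noncomputable def oneSubExpMulRpow (H lam u : ℝ) : ℝ := (1 - Real.exp (-(lam * u))) * u ^ (H - 3/2)

theorem measurable_oneSubExpMulRpow (H lam : ℝ) : Measurable (oneSubExpMulRpow H lam) := by
  unfold oneSubExpMulRpow; fun_prop

theorem exp_sub_exp_mul_rpow_eq (H lam t s τ : ℝ) :
    (Real.exp (-(lam * (t - τ))) - Real.exp (-(lam * (t - s)))) * (τ - s) ^ (H - 3/2)
      = Real.exp (-(lam * (t - τ))) * oneSubExpMulRpow H lam (τ - s) := by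
  have h : Real.exp (-(lam * (t - τ))) * Real.exp (-(lam * (τ - s)))
      = Real.exp (-(lam * (t - s))) := by
    rw [← Real.exp_add]; ring_nf
  rw [oneSubExpMulRpow, ← h]; ring

theorem setLIntegral_Iic_enorm_exp {lam : ℝ} (hlam : 0 < lam) (t : ℝ) :
    ∫⁻ τ in Iic t, ‖Real.exp (-(lam * (t - τ)))‖ₑ = ENNReal.ofReal lam⁻¹ := by
  have h : ∀ τ, Real.exp (-(lam * (t - τ))) = Real.exp (-(lam * t)) * Real.exp (lam * τ) :=
    fun τ => by rw [← Real.exp_add]; ring_nf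
  simp_rw [Real.enorm_eq_ofReal (Real.exp_nonneg _), h]
  rw [← ofReal_integral_eq_lintegral_ofReal ((integrableOn_exp_mul_Iic hlam t).const_mul _)
    (ae_of_all _ fun τ => by positivity), integral_const_mul, integral_exp_mul_Iic hlam,
    mul_div_assoc', ← Real.exp_add, neg_add_cancel, Real.exp_zero, one_div]

theorem sq_oneSubExpMulRpow {H lam u : ℝ} (hu : 0 < u) :
    oneSubExpMulRpow H lam u ^ 2 = (1 - Real.exp (-(lam * u))) ^ 2 * u ^ (2 * H - 3) := by
  rw [oneSubExpMulRpow, mul_pow, ← Real.rpow_natCast (u ^ _), ← Real.rpow_mul hu.le]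
  congr 2; push_cast; ring

theorem integrableOn_sq_oneSubExpMulRpow {H lam : ℝ} (hH : 0 < H) (hH' : H < 1/2)
    (hlam : 0 ≤ lam) : IntegrableOn (fun u => oneSubExpMulRpow H lam u ^ 2) (Ioi 0) := by
  have hmeas : AEStronglyMeasurable (fun u => oneSubExpMulRpow H lam u ^ 2) :=
    ((measurable_oneSubExpMulRpow H lam).pow_const 2).aestronglyMeasurable
  have h0 : ∀ u, 0 ≤ u → 0 ≤ 1 - Real.exp (-(lam * u)) := fun u hu => by
    have := Real.exp_le_one_iff.2 (neg_nonpos.2 (mul_nonneg hlam hu)); linarith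
  rw [← Ioc_union_Ioi_eq_Ioi zero_le_one]
  refine IntegrableOn.union ?_ ?_
  · refine Integrable.mono' ((intervalIntegral.intervalIntegrable_rpow' (r := 2 * H - 1)
      (by linarith)).1.const_mul (lam ^ 2)) hmeas.restrict ?_
    filter_upwards [ae_restrict_mem measurableSet_Ioc] with u hu
    rw [Real.norm_eq_abs, abs_sq, sq_oneSubExpMulRpow hu.1]
    have h1 : 1 - Real.exp (-(lam * u)) ≤ lam * u := by
      linarith [Real.one_sub_le_exp_neg (lam * u)]
    calc (1 - Real.exp (-(lam * u))) ^ 2 * u ^ (2 * H - 3)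
        ≤ (lam * u) ^ 2 * u ^ (2 * H - 3) :=
          mul_le_mul_of_nonneg_right (pow_le_pow_left₀ (h0 u hu.1.le) h1 2)
            (Real.rpow_nonneg hu.1.le _)
      _ = lam ^ 2 * u ^ (2 * H - 1) := by
        rw [mul_pow, mul_assoc, ← Real.rpow_natCast u 2, ← Real.rpow_add hu.1]
        congr 2; push_cast; ring
  · refine Integrable.mono' (integrableOn_Ioi_rpow_of_lt (a := 2 * H - 3) (by linarith)
      zero_lt_one) hmeas.restrict ?_
    filter_upwards [ae_restrict_mem measurableSet_Ioi] with u (hu : 1 < u)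
    have hu0 : 0 < u := zero_lt_one.trans hu
    rw [Real.norm_eq_abs, abs_sq, sq_oneSubExpMulRpow hu0]
    have h1 : 1 - Real.exp (-(lam * u)) ≤ 1 := by linarith [Real.exp_nonneg (-(lam * u))]
    calc (1 - Real.exp (-(lam * u))) ^ 2 * u ^ (2 * H - 3) ≤ 1 ^ 2 * u ^ (2 * H - 3) :=
          mul_le_mul_of_nonneg_right (pow_le_pow_left₀ (h0 u hu0.le) h1 2) (by positivity)
      _ = u ^ (2 * H - 3) := by rw [one_pow, one_mul]

theorem oneSubExpMulRpow_eq_rpow_mul (H : ℝ) {lam u : ℝ} (hlam : 0 < lam) (hu : 0 < u) :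
    oneSubExpMulRpow H lam u = lam ^ (3/2 - H) * oneSubExpMulRpow H 1 (lam * u) := by
  have h : lam ^ (3/2 - H) * lam ^ (H - 3/2) = 1 := by
    rw [← Real.rpow_add hlam]; norm_num
  rw [oneSubExpMulRpow, oneSubExpMulRpow, one_mul, Real.mul_rpow hlam.le hu.le]
  linear_combination (-(1 - Real.exp (-(lam * u))) * u ^ (H - 3/2)) * h

theorem setLIntegral_Ioi_enorm_sq_oneSubExpMulRpow (H : ℝ) {lam : ℝ} (hlam : 0 < lam) :
    ∫⁻ u in Ioi 0, ‖oneSubExpMulRpow H lam u‖ₑ ^ 2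
      = ENNReal.ofReal (lam ^ (2 - 2 * H)) * ∫⁻ u in Ioi 0, ‖oneSubExpMulRpow H 1 u‖ₑ ^ 2 := by
  have hscale : ∀ u ∈ Ioi (0:ℝ), ‖oneSubExpMulRpow H lam u‖ₑ ^ 2
      = ENNReal.ofReal (lam ^ (3 - 2 * H)) * ‖oneSubExpMulRpow H 1 (lam * u)‖ₑ ^ 2 := by
    intro u hu
    rw [oneSubExpMulRpow_eq_rpow_mul H hlam hu, enorm_mul, mul_pow,
      Real.enorm_eq_ofReal (by positivity), ← ENNReal.ofReal_pow (by positivity),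
      ← Real.rpow_natCast, ← Real.rpow_mul hlam.le]
    congr 3; push_cast; ring
  rw [setLIntegral_congr_fun measurableSet_Ioi hscale,
    lintegral_const_mul' _ _ ENNReal.ofReal_ne_top,
    setLIntegral_Ioi_zero_comp_mul_left (fun v => ‖oneSubExpMulRpow H 1 v‖ₑ ^ 2) hlam,
    ← mul_assoc, ← ENNReal.ofReal_mul (by positivity), ← Real.rpow_neg_one,
    ← Real.rpow_add hlam]
  congr 3; ring

/-- For `H ∈ (0,1/2)` there exists `C_H ∈ (0,∞)` such that for all `λ > 0` and `t ≥ 0`,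
`∫₀ᵗ ( ∫ₛᵗ (e^{-λ(t-τ)} - e^{-λ(t-s)}) (τ-s)^{H-3/2} dτ )² ds ≤ C_H λ^{-2H}`. -/
theorem stmt17 (H : ℝ) (hH : H ∈ Set.Ioo (0 : ℝ) (1/2)) :
    ∃ C : ℝ, 0 < C ∧ ∀ lam : ℝ, 0 < lam → ∀ t : ℝ, 0 ≤ t →
      (∫ s in (0:ℝ)..t,
        (∫ τ in s..t,
            (Real.exp (-(lam * (t - τ))) - Real.exp (-(lam * (t - s))))
              * (τ - s) ^ (H - 3/2)) ^ 2)
        ≤ C * lam ^ (-(2*H)) := by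
  set K := ∫⁻ u in Ioi 0, ‖oneSubExpMulRpow H 1 u‖ₑ ^ 2 with hKdef
  have hK : K ≠ ⊤ := by
    simpa only [K, enorm_pow] using
      (integrableOn_sq_oneSubExpMulRpow hH.1 hH.2 zero_le_one).2.ne
  refine ⟨K.toReal + 1, by positivity, fun lam hlam t ht => ?_⟩
  have hbound := enorm_intervalIntegral_sq_intervalIntegral_mul_sub_le
    (f := fun τ => Real.exp (-(lam * (t - τ)))) (by fun_prop)
    (measurable_oneSubExpMulRpow H lam) ht
  rw [setLIntegral_Iic_enorm_exp hlam, setLIntegral_Ioi_enorm_sq_oneSubExpMulRpow H hlam,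
    ← hKdef] at hbound
  simp_rw [exp_sub_exp_mul_rpow_eq]
  refine (le_abs_self _).trans ?_
  rw [← Real.norm_eq_abs, ← toReal_enorm]
  refine ENNReal.toReal_le_of_le_ofReal (by positivity) (hbound.trans ?_)
  have hpow : lam⁻¹ ^ 2 * lam ^ (2 - 2 * H) = lam ^ (-(2 * H)) := by
    rw [Real.rpow_sub hlam, Real.rpow_neg hlam.le, Real.rpow_two]; field_simp
  calc ENNReal.ofReal lam⁻¹ ^ 2 * (ENNReal.ofReal (lam ^ (2 - 2 * H)) * K)
      = ENNReal.ofReal (K.toReal * lam ^ (-(2 * H))) := by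
        rw [← hpow, ENNReal.ofReal_mul (by positivity), ENNReal.ofReal_mul (by positivity),
          ENNReal.ofReal_toReal hK, ENNReal.ofReal_pow (by positivity)]
        ring
    _ ≤ ENNReal.ofReal ((K.toReal + 1) * lam ^ (-(2 * H))) := by
        gcongr; linarith
end

section
/- Let λ > 0 and Δt > 0, set t_j = jΔt for j ∈ ℕ and let ℓ(t) = ⌊t/Δt⌋ for t ≥ 0 (so t_{ℓ(t)} ≤ t < t_{ℓ(t)+1}). Then for all 0 ≤ s ≤ τ one has |e^{−λ(τ − t_{ℓ(τ)})} − e^{−λ(s − t_{ℓ(s)})}| ≤ min(1, λ(τ − s)) + 𝟙_{[t_{ℓ(s)+1}, t_{ℓ(s)+2})}(τ) · min(1, λΔt), where 𝟙_{[t_{ℓ(s)+1}, t_{ℓ(s)+2})}(τ) equals 1 if t_{ℓ(s)+1} ≤ τ < t_{ℓ(s)+2} and 0 otherwise. -/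
/-!
Write `r(t) = t - ⌊t/Δt⌋ Δt ∈ [0, Δt)` for the offset of `t` from the grid. Since `exp (-·)` is
`1`-Lipschitz and bounded by `1` on `[0, ∞)`, the left-hand side is at most `min 1 (λ |r(τ) - r(s)|)`.
If `s` and `τ` lie in the same cell then `r(τ) - r(s) = τ - s`; if `τ` lies at least two cells
further then `τ - s ≥ Δt > |r(τ) - r(s)|`. Only in the adjacent cell can `|r(τ) - r(s)|` exceed
`τ - s`, and there it is still below `Δt`.
-/

open Real

lemma abs_exp_neg_sub_exp_neg_le_min {x y : ℝ} (hx : 0 ≤ x) (hy : 0 ≤ y) :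
    |exp (-x) - exp (-y)| ≤ min 1 |x - y| := by
  wlog hxy : x ≤ y generalizing x y
  · rw [abs_sub_comm, abs_sub_comm x]
    exact this hy hx (le_of_not_ge hxy)
  have hdecay : exp (-y) ≤ exp (-x) := exp_le_exp.mpr (neg_le_neg hxy)
  have hx_le_one : exp (-x) ≤ 1 := exp_le_one_iff.mpr (neg_nonpos.mpr hx)
  rw [abs_of_nonneg (sub_nonneg.mpr hdecay), abs_of_nonpos (sub_nonpos.mpr hxy), neg_sub]
  refine le_min (by linarith [exp_pos (-y)]) ?_
  have hsplit : exp (-y) = exp (-x) * exp (-(y - x)) := by rw [← exp_add]; ring_nf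
  calc exp (-x) - exp (-y) = exp (-x) * (1 - exp (-(y - x))) := by rw [hsplit]; ring
    _ ≤ 1 * (y - x) :=
        mul_le_mul hx_le_one (by linarith [one_sub_le_exp_neg (y - x)])
          (by linarith [exp_le_one_iff.mpr (neg_nonpos.mpr (sub_nonneg.mpr hxy))]) zero_le_one
    _ = y - x := one_mul _

/-- The paper's `t - t_{ℓ(t)}`. -/
noncomputable def gridOffset (Δt t : ℝ) : ℝ := t - ⌊t / Δt⌋₊ * Δt

section GridOffset

variable {Δt s t τ : ℝ}

lemma gridOffset_nonneg (hΔt : 0 < Δt) (ht : 0 ≤ t) : 0 ≤ gridOffset Δt t :=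
  sub_nonneg.mpr ((le_div_iff₀ hΔt).mp (Nat.floor_le (div_nonneg ht hΔt.le)))

lemma gridOffset_lt (hΔt : 0 < Δt) : gridOffset Δt t < Δt := by
  have := (div_lt_iff₀ hΔt).mp (Nat.lt_floor_add_one (t / Δt))
  unfold gridOffset
  linarith

lemma abs_gridOffset_sub_lt (hΔt : 0 < Δt) (hτ : 0 ≤ τ) (hs : 0 ≤ s) :
    |gridOffset Δt τ - gridOffset Δt s| < Δt :=
  abs_sub_lt_of_nonneg_of_lt (gridOffset_nonneg hΔt hτ) (gridOffset_lt hΔt)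
    (gridOffset_nonneg hΔt hs) (gridOffset_lt hΔt)

lemma sub_eq_gridOffset_sub_add (Δt s τ : ℝ) :
    τ - s = gridOffset Δt τ - gridOffset Δt s + (⌊τ / Δt⌋₊ - ⌊s / Δt⌋₊ : ℝ) * Δt := by
  unfold gridOffset
  ring

lemma abs_gridOffset_sub_le_of_floor_ne_succ (hΔt : 0 < Δt) (hs : 0 ≤ s) (hsτ : s ≤ τ)
    (hcell : ⌊τ / Δt⌋₊ ≠ ⌊s / Δt⌋₊ + 1) :
    |gridOffset Δt τ - gridOffset Δt s| ≤ τ - s := by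
  have hmono : ⌊s / Δt⌋₊ ≤ ⌊τ / Δt⌋₊ := Nat.floor_le_floor (div_le_div_of_nonneg_right hsτ hΔt.le)
  have hdecomp := sub_eq_gridOffset_sub_add Δt s τ
  rcases hmono.eq_or_lt with hsame | hnext
  · rw [hsame, sub_self, zero_mul, add_zero] at hdecomp
    rw [← hdecomp, abs_of_nonneg (sub_nonneg.mpr hsτ)]
  · have hgap : (2 : ℝ) ≤ ⌊τ / Δt⌋₊ - ⌊s / Δt⌋₊ := by
      rw [le_sub_iff_add_le']
      exact_mod_cast (by omega : ⌊s / Δt⌋₊ + 2 ≤ ⌊τ / Δt⌋₊)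
    have hlt := abs_gridOffset_sub_lt hΔt (hs.trans hsτ) hs
    have := neg_abs_le (gridOffset Δt τ - gridOffset Δt s)
    nlinarith

lemma floor_div_eq_succ_iff (hΔt : 0 < Δt) (hτ : 0 ≤ τ) (m : ℕ) :
    ⌊τ / Δt⌋₊ = m + 1 ↔ ((m : ℝ) + 1) * Δt ≤ τ ∧ τ < ((m : ℝ) + 2) * Δt := by
  rw [Nat.floor_eq_iff (div_nonneg hτ hΔt.le), le_div_iff₀ hΔt, div_lt_iff₀ hΔt]
  push_cast
  ring_nf

end GridOffset

/-- Grid-offset estimate: for `λ, Δt > 0`, with `t_j = jΔt` and `ℓ(t) = ⌊t/Δt⌋`, one has,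
for all `0 ≤ s ≤ τ`,
`|e^{-λ(τ - t_{ℓ(τ)})} - e^{-λ(s - t_{ℓ(s)})}| ≤ min(1, λ(τ-s)) + 𝟙_{[t_{ℓ(s)+1}, t_{ℓ(s)+2})}(τ) min(1, λΔt)`. -/
theorem stmt18 (lam Δt : ℝ) (hlam : 0 < lam) (hΔt : 0 < Δt) :
    ∀ s τ : ℝ, 0 ≤ s → s ≤ τ →
      |Real.exp (-(lam * (τ - (⌊τ / Δt⌋₊ : ℝ) * Δt)))
          - Real.exp (-(lam * (s - (⌊s / Δt⌋₊ : ℝ) * Δt)))|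
        ≤ min 1 (lam * (τ - s))
          + (if ((⌊s / Δt⌋₊ : ℝ) + 1) * Δt ≤ τ ∧ τ < ((⌊s / Δt⌋₊ : ℝ) + 2) * Δt
              then (1:ℝ) else 0) * min 1 (lam * Δt) := by
  intro s τ hs hsτ
  have hτ : 0 ≤ τ := hs.trans hsτ
  have hexp := abs_exp_neg_sub_exp_neg_le_min
    (mul_nonneg hlam.le (gridOffset_nonneg hΔt hτ)) (mul_nonneg hlam.le (gridOffset_nonneg hΔt hs))
  rw [← mul_sub, abs_mul, abs_of_pos hlam] at hexp
  have hmin {a b : ℝ} (hab : a ≤ b) : min 1 (lam * a) ≤ min 1 (lam * b) :=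
    min_le_min_left 1 (mul_le_mul_of_nonneg_left hab hlam.le)
  split_ifs with hcell
  · have hfirst_nonneg : 0 ≤ min 1 (lam * (τ - s)) :=
      le_min zero_le_one (mul_nonneg hlam.le (sub_nonneg.mpr hsτ))
    rw [one_mul]
    exact (hexp.trans (hmin (abs_gridOffset_sub_lt hΔt hτ hs).le)).trans
      (le_add_of_nonneg_left hfirst_nonneg)
  · rw [← floor_div_eq_succ_iff hΔt hτ] at hcell
    rw [zero_mul, add_zero]
    exact hexp.trans (hmin (abs_gridOffset_sub_le_of_floor_ne_succ hΔt hs hsτ hcell))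
end
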